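/- arXiv:1703.01668 — 8 statements merged into one kernel-verified Lean document; each statement's English description precedes it below -/
import Mathlib

section
/- For every natural number n ≥ 1 and real parameters y > 0 and λ, the functions J_n(y,λ) = ∫₀¹ t^{y²-λ} e^{(1-t)y²} (1-t)^n (dt/t) satisfy the recurrence n(J_n(y,λ) - J_{n-1}(y,λ)) + y² J_{n+1}(y,λ) + λ y J_n(y,λ) = 0. -/
/-!
Write `A_k` for `expBetaIntegral a (y²) k`, where `a = y² + λ y`. Differentiate
`t ^ a * exp ((1 - t) * y²) * (1 - t) ^ n` and integrate over `[0, 1]`: the boundary terms vanish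
because `a > 0` and `n ≥ 1`. Each resulting integral is an `A_k`, or, after writing
`t ^ a = t ^ (a - 1) - t ^ (a - 1) * (1 - t)`, a difference `A_k - A_{k+1}`; with `a - y² = λ y`
this is the recurrence.
-/

open MeasureTheory Real Set

noncomputable def expBetaKernel (r c : ℝ) (k : ℕ) (t : ℝ) : ℝ :=
  t ^ r * exp ((1 - t) * c) * (1 - t) ^ k

section

variable {r : ℝ} (c : ℝ) (k : ℕ)

theorem integrableOn_expBetaKernel (hr : -1 < r) :
    IntegrableOn (expBetaKernel r c k) (Ioo 0 1) := by
  have hrpow : IntegrableOn (fun t : ℝ => t ^ r) (Ioo 0 1) :=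
    (intervalIntegral.intervalIntegrable_rpow' hr).1.mono_set Ioo_subset_Ioc_self
  have := hrpow.mul_continuousOn_of_subset (g' := fun t => exp ((1 - t) * c) * (1 - t) ^ k)
    (by fun_prop) measurableSet_Ioo isCompact_Icc Ioo_subset_Icc_self
  unfold expBetaKernel
  simpa only [mul_assoc] using this

theorem continuous_expBetaKernel (hr : 0 ≤ r) : Continuous (expBetaKernel r c k) :=
  ((continuous_rpow_const hr).mul (by fun_prop)).mul (by fun_prop)

theorem expBetaKernel_add_one {t : ℝ} (ht : 0 < t) :
    expBetaKernel (r + 1) c k t = expBetaKernel r c k t - expBetaKernel r c (k + 1) t := by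
  simp only [expBetaKernel, rpow_add_one ht.ne', pow_succ]
  ring

theorem integral_expBetaKernel_add_one (hr : -1 < r) :
    ∫ t in Ioo 0 1, expBetaKernel (r + 1) c k t =
      (∫ t in Ioo 0 1, expBetaKernel r c k t) - ∫ t in Ioo 0 1, expBetaKernel r c (k + 1) t := by
  rw [← integral_sub (integrableOn_expBetaKernel c k hr) (integrableOn_expBetaKernel c (k + 1) hr)]
  exact setIntegral_congr_fun measurableSet_Ioo fun t ht => expBetaKernel_add_one c k ht.1

theorem hasDerivAt_expBetaKernel {t : ℝ} (ht : 0 < t) :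
    HasDerivAt (expBetaKernel r c (k + 1))
      (r * expBetaKernel (r - 1) c (k + 1) t - c * expBetaKernel r c (k + 1) t
        - (k + 1) * expBetaKernel r c k t) t := by
  have hsub : HasDerivAt (fun s : ℝ => 1 - s) (0 - 1) t :=
    (hasDerivAt_const t 1).sub (hasDerivAt_id' t)
  refine (((hasDerivAt_rpow_const (p := r) (Or.inl ht.ne')).fun_mul (hsub.mul_const c).exp).fun_mul
    (hsub.fun_pow (k + 1))).congr_deriv ?_
  simp only [expBetaKernel, Nat.cast_add, Nat.cast_one, add_tsub_cancel_right]
  ring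

theorem integral_expBetaKernel_by_parts (hr : 0 < r) :
    r * (∫ t in Ioo 0 1, expBetaKernel (r - 1) c (k + 1) t)
      - c * (∫ t in Ioo 0 1, expBetaKernel r c (k + 1) t)
      - (k + 1) * (∫ t in Ioo 0 1, expBetaKernel r c k t) = 0 := by
  have h₁ := (integrableOn_expBetaKernel c (k + 1) (by linarith : -1 < r - 1)).const_mul r
  have h₂ := (integrableOn_expBetaKernel c (k + 1) (by linarith : -1 < r)).const_mul c
  have h₃ := (integrableOn_expBetaKernel c k (by linarith : -1 < r)).const_mul ((k : ℝ) + 1)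
  have hftc : ∫ t in Ioo 0 1, (r * expBetaKernel (r - 1) c (k + 1) t
      - c * expBetaKernel r c (k + 1) t - (k + 1) * expBetaKernel r c k t) = 0 := by
    rw [← integral_Ioc_eq_integral_Ioo, ← intervalIntegral.integral_of_le zero_le_one,
      intervalIntegral.integral_eq_sub_of_hasDerivAt_of_le zero_le_one
        (continuous_expBetaKernel c (k + 1) hr.le).continuousOn
        (fun t ht => hasDerivAt_expBetaKernel c k ht.1)
        ((intervalIntegrable_iff_integrableOn_Ioo_of_le zero_le_one).2 ((h₁.sub' h₂).sub' h₃))]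
    simp [expBetaKernel, zero_rpow hr.ne']
  rwa [integral_sub (h₁.sub' h₂) h₃, integral_sub h₁ h₂, integral_const_mul, integral_const_mul,
    integral_const_mul] at hftc

end

noncomputable def expBetaIntegral (a c : ℝ) (k : ℕ) : ℝ :=
  ∫ t in Ioo 0 1, expBetaKernel (a - 1) c k t

theorem expBetaIntegral_recurrence {a : ℝ} (ha : 0 < a) (c : ℝ) (k : ℕ) :
    (k + 1) * (expBetaIntegral a c (k + 1) - expBetaIntegral a c k)
      + c * expBetaIntegral a c (k + 2) + (a - c) * expBetaIntegral a c (k + 1) = 0 := by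
  have hsplit (j : ℕ) : ∫ t in Ioo 0 1, expBetaKernel a c j t =
      expBetaIntegral a c j - expBetaIntegral a c (j + 1) := by
    have h := integral_expBetaKernel_add_one c j (r := a - 1) (by linarith)
    rwa [sub_add_cancel] at h
  have hparts : a * expBetaIntegral a c (k + 1) - c * (∫ t in Ioo 0 1, expBetaKernel a c (k + 1) t)
      - (k + 1) * (∫ t in Ioo 0 1, expBetaKernel a c k t) = 0 :=
    integral_expBetaKernel_by_parts c k ha
  rw [hsplit, hsplit] at hparts
  linear_combination hparts

theorem jn_recurrence_general (y lam : ℝ) (ha : 0 < y ^ 2 + lam * y)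
    (J : ℕ → ℝ)
    (hJ : ∀ m : ℕ, J m =
      ∫ t in Set.Ioo (0 : ℝ) 1,
        t ^ (y ^ 2 + lam * y - 1) * Real.exp ((1 - t) * y ^ 2) * (1 - t) ^ m)
    (n : ℕ) (hn : 1 ≤ n) :
    (n : ℝ) * (J n - J (n - 1)) + y ^ 2 * J (n + 1) + lam * y * J n = 0 := by
  obtain ⟨k, rfl⟩ : ∃ k, n = k + 1 := ⟨n - 1, by omega⟩
  have hJ' (m : ℕ) : J m = expBetaIntegral (y ^ 2 + lam * y) (y ^ 2) m := hJ m
  simp only [hJ', Nat.add_sub_cancel]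
  push_cast
  linear_combination expBetaIntegral_recurrence ha (y ^ 2) k

/-- Recurrence for the `J_n` functions (Bismut–Lebeau, Eq. (16.4.63)):
with `a = y² + λy > 0`, `A_n = ∫₀¹ t^(a-1) e^((1-t)y²) (1-t)^n dt`,
one has `n (A_n - A_{n-1}) + y² A_{n+1} + λ y A_n = 0` for `n ≥ 1`. -/
theorem jn_recurrence (y lam : ℝ) (hy : 0 < y) (ha : 0 < y ^ 2 + lam * y)
    (J : ℕ → ℝ)
    (hJ : ∀ m : ℕ, J m =
      ∫ t in Set.Ioo (0 : ℝ) 1,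
        t ^ (y ^ 2 + lam * y - 1) * Real.exp ((1 - t) * y ^ 2) * (1 - t) ^ m)
    (n : ℕ) (hn : 1 ≤ n) :
    (n : ℝ) * (J n - J (n - 1)) + y ^ 2 * J (n + 1) + lam * y * J n = 0 :=
  jn_recurrence_general y lam ha J hJ n hn
end

section
/- For real parameters y > 0 and λ with y² + λy > 0, the functions J_n defined by J_n = ∫₀¹ t^{y²+λy-1} e^{(1-t)y²} (1-t)^n dt satisfy the n = 0 identity y² J_1 + λ y J_0 = 1. -/
/-!
With `a = y² + λy`, the combination `y²(1 - t) + λy = a - y²t` turns `y² J₁ + λy J₀` into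
the integral over `(0, 1)` of `t^(a-1) e^((1-t)y²) (a - y²t)`, which is the derivative of
`t^a e^((1-t)y²)`.
Since `a > 0` this primitive is continuous on `[0, 1]`, vanishes at `0` and equals `1` at `1`.
-/

open MeasureTheory Real Set

theorem integrableOn_Icc_rpow_sub_one_mul {a : ℝ} (ha : 0 < a) {g : ℝ → ℝ}
    (hg : ContinuousOn g (Icc 0 1)) :
    IntegrableOn (fun t => t ^ (a - 1) * g t) (Icc 0 1) := by
  have hpow : IntervalIntegrable (fun t : ℝ => t ^ (a - 1)) volume 0 1 :=
    intervalIntegral.intervalIntegrable_rpow' (by linarith)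
  rw [intervalIntegrable_iff_integrableOn_Icc_of_le zero_le_one] at hpow
  exact hpow.mul_continuousOn hg isCompact_Icc

theorem hasDerivAt_rpow_mul_exp {a c t : ℝ} (ht : t ≠ 0) :
    HasDerivAt (fun t => t ^ a * exp ((1 - t) * c))
      (t ^ (a - 1) * exp ((1 - t) * c) * (a - c * t)) t := by
  have hlin : HasDerivAt (fun t : ℝ => (1 - t) * c) (-c) t := by
    simpa using ((hasDerivAt_id t).const_sub 1).mul_const c
  refine ((hasDerivAt_rpow_const (p := a) (Or.inl ht)).mul hlin.exp).congr_deriv ?_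
  rw [show t ^ a = t ^ (a - 1) * t by rw [← rpow_add_one ht]; ring_nf]
  ring

theorem integral_Ioo_rpow_sub_one_mul_exp {a : ℝ} (ha : 0 < a) (c : ℝ) :
    ∫ t in Ioo (0 : ℝ) 1, t ^ (a - 1) * exp ((1 - t) * c) * (a - c * t) = 1 := by
  have hint : IntervalIntegrable
      (fun t => t ^ (a - 1) * exp ((1 - t) * c) * (a - c * t)) volume 0 1 := by
    rw [intervalIntegrable_iff_integrableOn_Icc_of_le zero_le_one]
    simpa only [mul_assoc] using
      integrableOn_Icc_rpow_sub_one_mul ha (g := fun t => exp ((1 - t) * c) * (a - c * t))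
        (by fun_prop)
  have hcont : ContinuousOn (fun t : ℝ => t ^ a * exp ((1 - t) * c)) (Icc 0 1) :=
    ((continuous_rpow_const ha.le).mul (by fun_prop)).continuousOn
  rw [← integral_Ioc_eq_integral_Ioo, ← intervalIntegral.integral_of_le zero_le_one,
    intervalIntegral.integral_eq_sub_of_hasDerivAt_of_le zero_le_one hcont
      (fun t ht => hasDerivAt_rpow_mul_exp ht.1.ne') hint]
  simp [zero_rpow ha.ne']

theorem jn_base_identity_general (y lam : ℝ) (ha : 0 < y ^ 2 + lam * y)
    (J : ℕ → ℝ)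
    (hJ : ∀ m : ℕ, J m =
      ∫ t in Set.Ioo (0 : ℝ) 1,
        t ^ (y ^ 2 + lam * y - 1) * Real.exp ((1 - t) * y ^ 2) * (1 - t) ^ m) :
    y ^ 2 * J 1 + lam * y * J 0 = 1 := by
  have hint (m : ℕ) : IntegrableOn
      (fun t => t ^ (y ^ 2 + lam * y - 1) * exp ((1 - t) * y ^ 2) * (1 - t) ^ m) (Ioo 0 1) := by
    simpa only [mul_assoc] using (integrableOn_Icc_rpow_sub_one_mul ha
      (g := fun t => exp ((1 - t) * y ^ 2) * (1 - t) ^ m) (by fun_prop)).mono_set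
        Ioo_subset_Icc_self
  rw [hJ 1, hJ 0, ← integral_const_mul, ← integral_const_mul,
    ← integral_add ((hint 1).const_mul _) ((hint 0).const_mul _)]
  convert integral_Ioo_rpow_sub_one_mul_exp ha (y ^ 2) using 1
  exact setIntegral_congr_fun measurableSet_Ioo fun t _ => by ring

/-- The `n = 0` identity `y² J₁ + λ y J₀ = 1` for
`J_n = ∫₀¹ t^(y²+λy-1) e^((1-t)y²) (1-t)^n dt`, with `y > 0` and `y² + λy > 0`. -/
theorem jn_base_identity (y lam : ℝ) (hy : 0 < y) (ha : 0 < y ^ 2 + lam * y)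
    (J : ℕ → ℝ)
    (hJ : ∀ m : ℕ, J m =
      ∫ t in Set.Ioo (0 : ℝ) 1,
        t ^ (y ^ 2 + lam * y - 1) * Real.exp ((1 - t) * y ^ 2) * (1 - t) ^ m) :
    y ^ 2 * J 1 + lam * y * J 0 = 1 :=
  jn_base_identity_general y lam ha J hJ
end

section
/- For α > -1, the alternating series φ⁻_α(λ) = Σ_{n≥1} (-1)^n n^α e^{-λ√n} remains bounded as λ → 0⁺ and converges to a finite limit C_α as λ → 0⁺. -/
/-!
Writing `S u = ∑ (-1)ⁿ uₙ` and `Δ` for the forward difference, summation by parts gives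
`S u = (u₀ - S (Δ u)) / 2`, so it suffices to control `S (Δᵏ u_λ)` for one `k`, with
`u_λ(n) = (n+1)^α e^{-λ√(n+1)}`. The `k`-th derivative of `x ↦ x^α e^{-λ√x}` is a combination of
`x^(α-k) (λ√x)ʲ e^{-λ√x}`, hence `O(x^(α-k))` uniformly in `λ ≥ 0` since `tʲ e^{-t}` is bounded.
By the mean value theorem the same bound holds for `Δᵏ u_λ`, which is therefore dominated by a
summable sequence once `k > α + 1`, and dominated convergence lets `λ → 0⁺` in `S (Δᵏ u_λ)`.
-/

open Real Filter Topology Polynomial Set fwdDiff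

section AlternatingSum

variable {ι : Type*} {F : Filter ι}

lemma Summable.fwdDiff {G : Type*} [AddCommGroup G] [TopologicalSpace G]
    [IsTopologicalAddGroup G] {u : ℕ → G} (hu : Summable u) : Summable (Δ_[1] u) :=
  ((summable_nat_add_iff 1).2 hu).sub hu

lemma Summable.neg_one_pow_mul {u : ℕ → ℝ} (hu : Summable u) :
    Summable fun n ↦ (-1) ^ n * u n :=
  hu.abs.of_norm_bounded fun n ↦ by simp

lemma tendsto_fwdDiff_iter {M G : Type*} [AddCommMonoid M] [AddCommGroup G] [TopologicalSpace G]
    [IsTopologicalAddGroup G] {h : M} {u : ι → M → G} {v : M → G}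
    (hu : ∀ y, Tendsto (fun i ↦ u i y) F (𝓝 (v y))) (k : ℕ) (y : M) :
    Tendsto (fun i ↦ Δ_[h] ^[k] (u i) y) F (𝓝 (Δ_[h] ^[k] v y)) := by
  induction k generalizing u v with
  | zero => exact hu y
  | succ k ih => exact ih fun y ↦ (hu (y + h)).sub (hu y)

lemma fwdDiff_iter_comp_natCast {R G : Type*} [AddCommMonoidWithOne R] [AddCommGroup G]
    (f : R → G) (k n : ℕ) : Δ_[1] ^[k] (fun m : ℕ ↦ f m) n = Δ_[1] ^[k] f n := by
  simp [fwdDiff_iter_eq_sum_shift, nsmul_one]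

lemma tsum_neg_one_pow_mul_eq_of_summable {u : ℕ → ℝ} (hu : Summable u) :
    ∑' n, (-1) ^ n * u n = (u 0 - ∑' n, (-1) ^ n * Δ_[1] u n) / 2 := by
  have hshift := hu.neg_one_pow_mul.tsum_eq_zero_add
  have hdiff : ∑' n, (-1) ^ n * Δ_[1] u n
      = ∑' n, (-1) ^ n * u (n + 1) - ∑' n, (-1) ^ n * u n := by
    rw [← ((summable_nat_add_iff 1).2 hu).neg_one_pow_mul.tsum_sub hu.neg_one_pow_mul]
    simp only [fwdDiff, mul_sub]
  have hneg : ∑' n, (-1) ^ (n + 1) * u (n + 1) = -∑' n, (-1) ^ n * u (n + 1) := by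
    rw [← tsum_neg]; simp only [pow_succ, mul_neg_one, neg_mul]
  rw [hneg, pow_zero, one_mul] at hshift
  linarith

theorem exists_tendsto_tsum_neg_one_pow_mul_of_fwdDiff_iter {u : ι → ℕ → ℝ} {v : ℕ → ℝ}
    (hsum : ∀ᶠ i in F, Summable (u i)) (hu : ∀ n, Tendsto (fun i ↦ u i n) F (𝓝 (v n)))
    (k : ℕ) (hk : ∃ C, Tendsto (fun i ↦ ∑' n, (-1) ^ n * Δ_[1] ^[k] (u i) n) F (𝓝 C)) :
    ∃ C, Tendsto (fun i ↦ ∑' n, (-1) ^ n * u i n) F (𝓝 C) := by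
  induction k generalizing u v with
  | zero => exact hk
  | succ k ih =>
    obtain ⟨C, hC⟩ := ih (hsum.mono fun i hi ↦ hi.fwdDiff)
      (fun n ↦ (hu (n + 1)).sub (hu n)) hk
    refine ⟨(v 0 - C) / 2, (((hu 0).sub hC).div_const 2).congr' ?_⟩
    filter_upwards [hsum] with i hi
    exact (tsum_neg_one_pow_mul_eq_of_summable hi).symm

theorem exists_tendsto_tsum_neg_one_pow_mul_of_abs_fwdDiff_iter_le {u : ι → ℕ → ℝ} {v b : ℕ → ℝ}
    (hsum : ∀ᶠ i in F, Summable (u i)) (hu : ∀ n, Tendsto (fun i ↦ u i n) F (𝓝 (v n)))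
    (k : ℕ) (hb : Summable b) (hbound : ∀ᶠ i in F, ∀ n, |Δ_[1] ^[k] (u i) n| ≤ b n) :
    ∃ C, Tendsto (fun i ↦ ∑' n, (-1) ^ n * u i n) F (𝓝 C) :=
  exists_tendsto_tsum_neg_one_pow_mul_of_fwdDiff_iter hsum hu k
    ⟨_, tendsto_tsum_of_dominated_convergence hb
      (fun n ↦ (tendsto_fwdDiff_iter hu k n).const_mul _)
      (hbound.mono fun i hi n ↦ by simpa using hi n)⟩

end AlternatingSum

lemma rpow_le_two_rpow_abs_mul_rpow {x y : ℝ} (e : ℝ) (hx : 1 ≤ x) (hxy : x ≤ y)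
    (hy : y ≤ x + 1) : y ^ e ≤ 2 ^ |e| * x ^ e := by
  have hx0 : 0 < x := by linarith
  rcases le_or_gt 0 e with he | he
  · calc y ^ e ≤ (2 * x) ^ e := rpow_le_rpow (by linarith) (by linarith) he
      _ = 2 ^ |e| * x ^ e := by rw [abs_of_nonneg he, mul_rpow zero_le_two hx0.le]
  · calc y ^ e ≤ x ^ e := rpow_le_rpow_of_nonpos hx0 hxy he.le
      _ ≤ 2 ^ |e| * x ^ e :=
        le_mul_of_one_le_left (rpow_nonneg hx0.le e) (one_le_rpow one_le_two (abs_nonneg e))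

lemma hasDerivAt_fwdDiff_iter {f f' : ℝ → ℝ} {h : ℝ} (hh : 0 ≤ h)
    (hf : ∀ x, 0 < x → HasDerivAt f (f' x) x) (k : ℕ) {x : ℝ} (hx : 0 < x) :
    HasDerivAt (Δ_[h] ^[k] f) (Δ_[h] ^[k] f' x) x := by
  induction k generalizing f f' with
  | zero => exact hf x hx
  | succ k ih =>
    exact ih fun y hy ↦ ((hf (y + h) (by linarith)).comp_add_const y h).sub (hf y hy)

lemma abs_fwdDiff_le_of_abs_deriv_le {φ φ' : ℝ → ℝ} {x B : ℝ}
    (hφ : ∀ y ∈ Icc x (x + 1), HasDerivAt φ (φ' y) y) (hB : ∀ y ∈ Icc x (x + 1), |φ' y| ≤ B) :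
    |Δ_[1] φ x| ≤ B := by
  have h := norm_image_sub_le_of_norm_deriv_le_segment' (fun y hy ↦ (hφ y hy).hasDerivWithinAt)
    (fun y hy ↦ hB y (Ico_subset_Icc_self hy)) (x + 1) (right_mem_Icc.2 (by linarith))
  simpa [fwdDiff] using h

noncomputable def sqrtExpTerm (w : ℝ) (P : ℝ[X]) (lam x : ℝ) : ℝ :=
  x ^ w * (P.eval (lam * √x) * exp (-(lam * √x)))

lemma hasDerivAt_eval_mul_exp_neg (P : ℝ[X]) (t : ℝ) :
    HasDerivAt (fun t ↦ P.eval t * exp (-t)) ((derivative P - P).eval t * exp (-t)) t := by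
  refine ((P.hasDerivAt t).fun_mul (hasDerivAt_neg t).exp).congr_deriv ?_
  rw [eval_sub]; ring

lemma hasDerivAt_sqrtExpTerm (w : ℝ) (P : ℝ[X]) (lam : ℝ) {x : ℝ} (hx : 0 < x) :
    HasDerivAt (sqrtExpTerm w P lam)
      (sqrtExpTerm (w - 1) (C w * P + C (1 / 2) * X * (derivative P - P)) lam x) x := by
  have h : HasDerivAt (sqrtExpTerm w P lam) (w * x ^ (w - 1) * (P.eval (lam * √x) *
      exp (-(lam * √x))) + x ^ w * ((derivative P - P).eval (lam * √x) * exp (-(lam * √x)) *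
      (lam * (1 / (2 * √x))))) x :=
    (hasDerivAt_rpow_const (Or.inl hx.ne')).fun_mul ((hasDerivAt_eval_mul_exp_neg P _).comp x
      ((hasDerivAt_sqrt hx.ne').const_mul lam))
  convert h using 1
  have hw : x ^ w = x ^ (w - 1) * (√x * √x) := by
    rw [mul_self_sqrt hx.le, ← rpow_add_one hx.ne', sub_add_cancel]
  simp only [sqrtExpTerm, eval_add, eval_mul, eval_C, eval_X, eval_sub, hw]
  field_simp

lemma Polynomial.exists_abs_eval_mul_exp_neg_le (P : ℝ[X]) :
    ∃ M, ∀ t, 0 ≤ t → |P.eval t * exp (-t)| ≤ M := by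
  induction P using Polynomial.induction_on' with
  | add P Q hP hQ =>
    obtain ⟨M, hM⟩ := hP
    obtain ⟨N, hN⟩ := hQ
    refine ⟨M + N, fun t ht ↦ ?_⟩
    rw [eval_add, add_mul]
    exact (abs_add_le _ _).trans (add_le_add (hM t ht) (hN t ht))
  | monomial n a =>
    refine ⟨|a| * n.factorial, fun t ht ↦ ?_⟩
    have h : t ^ n * exp (-t) ≤ n.factorial := by
      rw [exp_neg, ← div_eq_mul_inv, div_le_iff₀ (exp_pos t), mul_comm]
      exact (div_le_iff₀ (by positivity)).1 (pow_div_factorial_le_exp t ht n)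
    rw [eval_monomial, mul_assoc, abs_mul, abs_of_nonneg (by positivity : 0 ≤ t ^ n * exp (-t))]
    exact mul_le_mul_of_nonneg_left h (abs_nonneg a)

lemma exists_abs_sqrtExpTerm_le (w : ℝ) (P : ℝ[X]) :
    ∃ M, ∀ lam, 0 ≤ lam → ∀ x, 0 < x → |sqrtExpTerm w P lam x| ≤ M * x ^ w := by
  obtain ⟨M, hM⟩ := P.exists_abs_eval_mul_exp_neg_le
  refine ⟨M, fun lam hlam x hx ↦ ?_⟩
  rw [sqrtExpTerm, abs_mul, abs_of_pos (rpow_pos_of_pos hx w), mul_comm M]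
  exact mul_le_mul_of_nonneg_left (hM _ (by positivity)) (rpow_nonneg hx.le w)

theorem exists_abs_fwdDiff_iter_sqrtExpTerm_le (k : ℕ) (w : ℝ) (P : ℝ[X]) :
    ∃ M, ∀ lam, 0 ≤ lam → ∀ x, 1 ≤ x → |Δ_[1] ^[k] (sqrtExpTerm w P lam) x| ≤ M * x ^ (w - k) := by
  induction k generalizing w P with
  | zero =>
    obtain ⟨M, hM⟩ := exists_abs_sqrtExpTerm_le w P
    exact ⟨M, fun lam hlam x hx ↦ by simpa using hM lam hlam x (by linarith)⟩
  | succ k ih =>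
    obtain ⟨M, hM⟩ := ih (w - 1) (C w * P + C (1 / 2) * X * (derivative P - P))
    have hM0 : 0 ≤ M := by simpa using (abs_nonneg _).trans (hM 0 le_rfl 1 le_rfl)
    refine ⟨M * 2 ^ |w - 1 - k|, fun lam hlam x hx ↦ ?_⟩
    rw [Function.iterate_succ_apply']
    refine abs_fwdDiff_le_of_abs_deriv_le (fun y hy ↦ hasDerivAt_fwdDiff_iter zero_le_one
      (fun z hz ↦ hasDerivAt_sqrtExpTerm w P lam hz) k (by linarith [hy.1])) fun y hy ↦ ?_
    calc _ ≤ M * y ^ (w - 1 - k) := hM lam hlam y (by linarith [hy.1])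
      _ ≤ M * (2 ^ |w - 1 - k| * x ^ (w - 1 - k)) :=
        mul_le_mul_of_nonneg_left (rpow_le_two_rpow_abs_mul_rpow _ hx hy.1 hy.2) hM0
      _ = M * 2 ^ |w - 1 - k| * x ^ (w - ↑(k + 1)) := by push_cast; ring_nf

lemma sqrtExpTerm_X_pow_mul (w : ℝ) (P : ℝ[X]) (m : ℕ) (lam : ℝ) {x : ℝ} (hx : 0 < x) :
    sqrtExpTerm (w - m / 2) (X ^ m * P) lam x = lam ^ m * sqrtExpTerm w P lam x := by
  have hsqrt : √x ^ m = x ^ ((m : ℝ) / 2) := by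
    rw [sqrt_eq_rpow, ← rpow_natCast, ← rpow_mul hx.le, one_div_mul_eq_div]
  have hw : x ^ w = x ^ (w - m / 2) * √x ^ m := by
    rw [hsqrt, ← rpow_add hx, sub_add_cancel]
  simp only [sqrtExpTerm, eval_mul, eval_pow, eval_X, hw, mul_pow]
  ring

lemma summable_natCast_add_one_rpow {p : ℝ} (hp : p < -1) :
    Summable fun n : ℕ ↦ ((n : ℝ) + 1) ^ p := by
  simpa using (summable_nat_add_iff 1).2 (Real.summable_nat_rpow.2 hp)

lemma summable_sqrtExpTerm (w : ℝ) (P : ℝ[X]) {lam : ℝ} (hlam : 0 < lam) :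
    Summable fun n : ℕ ↦ sqrtExpTerm w P lam (n + 1) := by
  obtain ⟨m, hm⟩ := exists_nat_gt (2 * (w + 1))
  obtain ⟨M, hM⟩ := exists_abs_sqrtExpTerm_le (w - m / 2) (X ^ m * P)
  have hp : w - m / 2 < -1 := by linarith
  refine ((summable_natCast_add_one_rpow hp).mul_left (M / lam ^ m)).of_norm_bounded fun n ↦ ?_
  have hx : (0 : ℝ) < n + 1 := by positivity
  have hpow : 0 < lam ^ m := pow_pos hlam m
  rw [norm_eq_abs, div_mul_eq_mul_div, le_div_iff₀ hpow, ← abs_of_pos hpow, ← abs_mul,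
    mul_comm, ← sqrtExpTerm_X_pow_mul w P m lam hx]
  exact hM lam hlam.le _ hx

lemma continuous_sqrtExpTerm_apply (w : ℝ) (P : ℝ[X]) (x : ℝ) :
    Continuous fun lam ↦ sqrtExpTerm w P lam x := by
  unfold sqrtExpTerm; fun_prop

theorem alternating_dirichlet_series_limit_general (α : ℝ) :
    (∀ lam : ℝ, 0 < lam →
      Summable (fun n : ℕ =>
        (-1 : ℝ) ^ (n + 1) * ((n : ℝ) + 1) ^ α * Real.exp (-lam * Real.sqrt ((n : ℝ) + 1)))) ∧
    ∃ C : ℝ,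
      Tendsto
        (fun lam : ℝ =>
          ∑' n : ℕ,
            (-1 : ℝ) ^ (n + 1) * ((n : ℝ) + 1) ^ α * Real.exp (-lam * Real.sqrt ((n : ℝ) + 1)))
        (nhdsWithin 0 (Set.Ioi 0)) (nhds C) := by
  set u : ℝ → ℕ → ℝ := fun lam n ↦ sqrtExpTerm α 1 lam (n + 1) with hu
  have hterm : ∀ lam (n : ℕ), (-1 : ℝ) ^ (n + 1) * ((n : ℝ) + 1) ^ α *
      exp (-lam * √((n : ℝ) + 1)) = -((-1) ^ n * u lam n) := fun lam n ↦ by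
    simp only [hu, sqrtExpTerm, eval_one, pow_succ, neg_mul]; ring
  simp only [hterm, tsum_neg]
  refine ⟨fun lam hlam ↦ (summable_sqrtExpTerm α 1 hlam).neg_one_pow_mul.neg, ?_⟩
  obtain ⟨k, hk⟩ := exists_nat_gt (α + 1)
  obtain ⟨M, hM⟩ := exists_abs_fwdDiff_iter_sqrtExpTerm_le k α 1
  have hbound : ∀ lam, 0 < lam → ∀ n, |Δ_[1] ^[k] (u lam) n| ≤ M * ((n : ℝ) + 1) ^ (α - k) := by
    intro lam hlam n
    rw [hu, fwdDiff_iter_comp_natCast (fun x ↦ sqrtExpTerm α 1 lam (x + 1)),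
      fwdDiff_iter_comp_add]
    exact hM lam hlam.le _ (by simp)
  obtain ⟨C, hC⟩ := exists_tendsto_tsum_neg_one_pow_mul_of_abs_fwdDiff_iter_le (v := u 0)
    (eventually_nhdsWithin_of_forall fun lam hlam ↦ summable_sqrtExpTerm α 1 hlam)
    (fun n ↦ ((continuous_sqrtExpTerm_apply α 1 _).tendsto 0).mono_left nhdsWithin_le_nhds) k
    ((summable_natCast_add_one_rpow (by linarith)).mul_left M)
    (eventually_nhdsWithin_of_forall hbound)
  exact ⟨-C, hC.neg⟩

/-- For `α > -1`, the alternating series `φ⁻_α(λ) = Σ_{n≥1} (-1)^n n^α e^(-λ√n)`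
converges for every `λ > 0` and tends to a finite limit `C_α` as `λ → 0⁺`
(in particular it remains bounded as `λ → 0⁺`). -/
theorem alternating_dirichlet_series_limit (α : ℝ) (hα : -1 < α) :
    (∀ lam : ℝ, 0 < lam →
      Summable (fun n : ℕ =>
        (-1 : ℝ) ^ (n + 1) * ((n : ℝ) + 1) ^ α * Real.exp (-lam * Real.sqrt ((n : ℝ) + 1)))) ∧
    ∃ C : ℝ,
      Tendsto
        (fun lam : ℝ =>
          ∑' n : ℕ,
            (-1 : ℝ) ^ (n + 1) * ((n : ℝ) + 1) ^ α * Real.exp (-lam * Real.sqrt ((n : ℝ) + 1)))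
        (nhdsWithin 0 (Set.Ioi 0)) (nhds C) :=
  alternating_dirichlet_series_limit_general α
end

section
/- For λ > 0, the sum over odd n of √n e^{-λ√n} satisfies Σ_{n≥1, n odd} √n e^{-λ√n} ~ 2/λ³ as λ → 0⁺. -/
/-!
With `δ = λ²` and `h x = x e^{-x}`, the sum `λ³ S(λ)` equals `∑ₖ δ h(√((2k+1)δ))`. The points
`sₖ = √(2kδ)` cut `(0, ∞)` into cells of equal mass `δ` for the measure `x dx`, and
`√((2k+1)δ)` lies in the `k`-th cell, so the sum is a Riemann sum for
`∫₀^∞ h(x) x dx = Γ(3) = 2`. On a cell `h` varies by at most `∫ |h'|` over that cell, so the error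
is at most `δ ∫₀^∞ |h'| = O(λ²)`.
-/

open Real Filter Topology

open MeasureTheory Set

lemma integrableOn_pow_mul_exp_neg_Ioi (n : ℕ) :
    IntegrableOn (fun x : ℝ => x ^ n * exp (-x)) (Ioi 0) := by
  refine (GammaIntegral_convergent (s := n + 1) (by positivity)).congr_fun
    (fun x _ => ?_) measurableSet_Ioi
  simp [mul_comm]

lemma integral_pow_mul_exp_neg_Ioi (n : ℕ) :
    ∫ x in Ioi (0 : ℝ), x ^ n * exp (-x) = n.factorial := by
  rw [← Gamma_nat_eq_factorial, Gamma_eq_integral (by positivity)]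
  refine setIntegral_congr_fun measurableSet_Ioi fun x _ => ?_
  simp [mul_comm]

theorem hasSum_setIntegral_Ioc_of_monotone {s : ℕ → ℝ} (hs : Monotone s)
    (hs_top : Tendsto s atTop atTop) {f : ℝ → ℝ} (hf : IntegrableOn f (Ioi (s 0))) :
    HasSum (fun k => ∫ x in Ioc (s k) (s (k + 1)), f x) (∫ x in Ioi (s 0), f x) := by
  have hU : ⋃ k, Ioc (s k) (s (k + 1)) = Ioi (s 0) := by
    simpa using iUnion_Ioc_map_succ_eq_Ioi (fun k => hs k.zero_le)
      (not_bddAbove_of_tendsto_atTop hs_top)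
  rw [← hU] at hf ⊢
  exact hasSum_integral_iUnion (fun _ => measurableSet_Ioc)
    (by simpa using hs.pairwise_disjoint_on_Ioc_succ) hf

section

variable {h h' : ℝ → ℝ} {a b : ℝ}

lemma abs_sub_le_setIntegral_abs_deriv (hderiv : ∀ t ∈ Icc a b, HasDerivAt h (h' t) t)
    (hint : IntegrableOn h' (Ioc a b)) {x y : ℝ} (hx : x ∈ Icc a b) (hy : y ∈ Icc a b) :
    |h y - h x| ≤ ∫ t in Ioc a b, |h' t| := by
  have hsub : uIoc x y ⊆ Ioc a b := Ioc_subset_Ioc (le_inf hx.1 hy.1) (sup_le hx.2 hy.2)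
  rw [← intervalIntegral.integral_eq_sub_of_hasDerivAt
    (fun t ht => hderiv t (uIcc_subset_Icc hx hy ht))
    (intervalIntegrable_iff.2 (hint.mono_set hsub))]
  calc |∫ t in x..y, h' t| ≤ ∫ t in uIoc x y, |h' t| := by
        simpa only [Real.norm_eq_abs] using
          intervalIntegral.norm_integral_le_integral_norm_uIoc (f := h')
    _ ≤ ∫ t in Ioc a b, |h' t| :=
        setIntegral_mono_set hint.abs (.of_forall fun _ => abs_nonneg _) hsub.eventuallyLE

lemma abs_mul_sub_setIntegral_mul_id_le {m C : ℝ} (ha : 0 ≤ a) (hab : a ≤ b)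
    (hint : IntegrableOn (fun x => h x * x) (Ioc a b)) (hC : ∀ x ∈ Icc a b, |h m - h x| ≤ C) :
    |(b ^ 2 - a ^ 2) / 2 * h m - ∫ x in Ioc a b, h x * x| ≤ (b ^ 2 - a ^ 2) / 2 * C := by
  have hid : ∫ x in Ioc a b, x = (b ^ 2 - a ^ 2) / 2 := by
    rw [← intervalIntegral.integral_of_le hab, integral_id]
  have hid_int : IntegrableOn (fun x : ℝ => x) (Ioc a b) :=
    continuous_id.integrableOn_Icc.mono_set Ioc_subset_Icc_self
  have hdiff : (b ^ 2 - a ^ 2) / 2 * h m - ∫ x in Ioc a b, h x * x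
      = ∫ x in Ioc a b, (h m - h x) * x := by
    rw [← hid, ← integral_mul_const (h m), ← integral_sub (hid_int.mul_const _) hint]
    congr 1 with x
    ring
  rw [hdiff, ← hid, ← integral_mul_const C]
  refine norm_integral_le_of_norm_le (f := fun x => (h m - h x) * x) (hid_int.mul_const C) ?_
  filter_upwards [ae_restrict_mem measurableSet_Ioc] with x hx
  rw [Real.norm_eq_abs, abs_mul, abs_of_pos (ha.trans_lt hx.1), mul_comm x]
  exact mul_le_mul_of_nonneg_right (hC x (Ioc_subset_Icc_self hx)) (ha.trans hx.1.le)

end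

theorem abs_tsum_mul_sqrt_odd_sub_integral_le {h h' : ℝ → ℝ} {δ : ℝ} (hδ : 0 < δ)
    (hderiv : ∀ x ∈ Ici (0 : ℝ), HasDerivAt h (h' x) x) (hh' : IntegrableOn h' (Ioi 0))
    (hh : IntegrableOn (fun x => h x * x) (Ioi 0)) :
    |∑' k : ℕ, δ * h √((2 * k + 1) * δ) - ∫ x in Ioi 0, h x * x|
      ≤ δ * ∫ x in Ioi 0, |h' x| := by
  set s : ℕ → ℝ := fun k => √(2 * k * δ)
  have hs_zero : s 0 = 0 := by simp [s]
  have hs_mono : Monotone s := fun k l hkl => sqrt_le_sqrt (by gcongr)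
  have hs_top : Tendsto s atTop atTop :=
    tendsto_sqrt_atTop.comp <|
      (tendsto_natCast_atTop_atTop.const_mul_atTop two_pos).atTop_mul_const hδ
  have hs_sq (k : ℕ) : (s (k + 1) ^ 2 - s k ^ 2) / 2 = δ := by
    simp only [s]
    rw [sq_sqrt (by positivity), sq_sqrt (by positivity)]
    push_cast
    ring
  have hmem (k : ℕ) : √((2 * k + 1) * δ) ∈ Icc (s k) (s (k + 1)) :=
    ⟨sqrt_le_sqrt (by linarith), sqrt_le_sqrt (by push_cast; linarith)⟩
  have hv := hasSum_setIntegral_Ioc_of_monotone hs_mono hs_top (hs_zero ▸ hh)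
  have he := hasSum_setIntegral_Ioc_of_monotone hs_mono hs_top (hs_zero ▸ hh'.abs)
  rw [hs_zero] at hv he
  have hblock (k : ℕ) : ‖δ * h √((2 * k + 1) * δ) - ∫ x in Ioc (s k) (s (k + 1)), h x * x‖
      ≤ δ * ∫ x in Ioc (s k) (s (k + 1)), |h' x| := by
    have hsub : Ioc (s k) (s (k + 1)) ⊆ Ioi 0 :=
      Ioc_subset_Ioi_self.trans (Ioi_subset_Ioi (sqrt_nonneg _))
    have := abs_mul_sub_setIntegral_mul_id_le (sqrt_nonneg _) (hs_mono k.le_succ)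
      (hh.mono_set hsub) fun x hx => abs_sub_le_setIntegral_abs_deriv
        (fun t ht => hderiv t ((sqrt_nonneg _).trans ht.1)) (hh'.mono_set hsub) hx (hmem k)
    rwa [hs_sq] at this
  have hd : Summable fun k : ℕ =>
      δ * h √((2 * k + 1) * δ) - ∫ x in Ioc (s k) (s (k + 1)), h x * x :=
    .of_norm_bounded (he.mul_left δ).summable hblock
  have hu := hd.hasSum.add hv
  simp only [sub_add_cancel] at hu
  rw [hu.tsum_eq, add_sub_cancel_right]
  exact tsum_of_norm_bounded (he.mul_left δ) hblock

lemma hasDerivAt_mul_exp_neg (x : ℝ) :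
    HasDerivAt (fun x => x * exp (-x)) ((1 - x) * exp (-x)) x :=
  ((hasDerivAt_id' x).mul (hasDerivAt_neg x).exp).congr_deriv (by ring)

lemma integrableOn_one_sub_mul_exp_neg_Ioi :
    IntegrableOn (fun x : ℝ => (1 - x) * exp (-x)) (Ioi 0) :=
  ((integrableOn_pow_mul_exp_neg_Ioi 0).sub (integrableOn_pow_mul_exp_neg_Ioi 1)).congr_fun
    (fun x _ => by simp only [Pi.sub_apply, pow_zero, pow_one]; ring) measurableSet_Ioi

lemma abs_tsum_sqrt_odd_mul_exp_neg_sub_two_le {δ : ℝ} (hδ : 0 < δ) :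
    |∑' k : ℕ, δ * (√((2 * k + 1) * δ) * exp (-√((2 * k + 1) * δ))) - 2|
      ≤ δ * ∫ x in Ioi 0, |(1 - x) * exp (-x)| := by
  have hsq (x : ℝ) : x * exp (-x) * x = x ^ 2 * exp (-x) := by ring
  have h2 : ∫ x in Ioi (0 : ℝ), x * exp (-x) * x = 2 := by
    simp only [hsq, integral_pow_mul_exp_neg_Ioi 2]
    norm_num
  convert abs_tsum_mul_sqrt_odd_sub_integral_le hδ (fun x _ => hasDerivAt_mul_exp_neg x)
    integrableOn_one_sub_mul_exp_neg_Ioi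
    (by simpa only [hsq] using integrableOn_pow_mul_exp_neg_Ioi 2)
  exact h2.symm

/-- For `λ > 0`, the sum over odd `n` satisfies
`Σ_{n odd} √n e^(-λ√n) ~ 2/λ³` as `λ → 0⁺`, i.e. with
`S(λ) = Σ_{k≥0} √(2k+1) e^(-λ√(2k+1))` one has `λ³ S(λ) → 2`. -/
theorem odd_sum_asymptotics :
    Tendsto
      (fun lam : ℝ =>
        lam ^ 3 *
          ∑' k : ℕ, Real.sqrt (2 * (k : ℝ) + 1) * Real.exp (-lam * Real.sqrt (2 * (k : ℝ) + 1)))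
      (nhdsWithin 0 (Set.Ioi 0)) (nhds 2) := by
  set V := ∫ x in Ioi (0 : ℝ), |(1 - x) * exp (-x)|
  have hbound : ∀ lam ∈ Ioi (0 : ℝ), ‖lam ^ 3 *
      ∑' k : ℕ, √(2 * (k : ℝ) + 1) * exp (-lam * √(2 * (k : ℝ) + 1)) - 2‖ ≤ lam ^ 2 * V := by
    intro lam hlam
    have hsqrt (k : ℕ) : √((2 * k + 1) * lam ^ 2) = lam * √(2 * k + 1) := by
      rw [sqrt_mul (by positivity), sqrt_sq hlam.le, mul_comm]
    rw [Real.norm_eq_abs, ← tsum_mul_left]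
    refine le_of_eq_of_le ?_ (abs_tsum_sqrt_odd_mul_exp_neg_sub_two_le (pow_pos hlam 2))
    congr 2
    refine tsum_congr fun k => ?_
    rw [hsqrt, neg_mul]
    ring
  have hlim : Tendsto (fun lam : ℝ => lam ^ 2 * V) (𝓝[>] (0 : ℝ)) (𝓝 0) :=
    tendsto_nhdsWithin_of_tendsto_nhds <|
      ((continuous_pow 2).mul continuous_const).tendsto' 0 0 (by simp)
  exact tendsto_sub_nhds_zero_iff.1 <|
    squeeze_zero_norm' (eventually_nhdsWithin_of_forall hbound) hlim
end

section
/- The power-series/integral interchange Σ_{n≥1} ((-y²)(1-t)(1-u))^n / n! = e^{-y²(1-t)(1-u)} - 1 yields, for a = y² + λy > 0, the identity Σ_{n≥1} (-y²)^n J_n(y,-λy)² / n! = ∫₀¹∫₀¹ (ut)^{a-1} e^{y²(2-t-u)} (e^{-y²(1-t)(1-u)} - 1) du dt, where J_n(y,-λy) = ∫₀¹ t^{a-1} e^{(1-t)y²}(1-t)^n dt. -/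
open MeasureTheory Real

/-!
Since `exp(-y²(1-t)(1-u)) - 1 = Σ_{n≥1} (-y²)ⁿ ((1-t)(1-u))ⁿ / n!`, the integrand is
`f(t) f(u) Σ cₙ (1-t)ⁿ (1-u)ⁿ` with `f(t) = t^(a-1) e^((1-t)y²)`, integrable on `(0,1)` since
`a > 0`.
The coefficients are absolutely summable and `|(1-t)ⁿ| ≤ 1`, so the terms are dominated by
`|cₙ| f(t) f(u)`, and the series can be integrated term by term, first in `u`, then in `t`;
each integration produces a factor `Jₙ`.
-/

section SeriesUnderIntegral

variable {α : Type*} [MeasurableSpace α] {μ : Measure α} {f : α → ℝ} {G : ℕ → α → ℝ} {c : ℕ → ℝ}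

theorem integral_norm_mul_le_integral_norm (hf : Integrable f μ) {g : α → ℝ}
    (hg : ∀ᵐ x ∂μ, ‖g x‖ ≤ 1) : ∫ x, ‖f x * g x‖ ∂μ ≤ ∫ x, ‖f x‖ ∂μ := by
  refine integral_mono_of_nonneg (.of_forall fun _ ↦ norm_nonneg _) hf.norm ?_
  filter_upwards [hg] with x hx
  simpa [norm_mul] using mul_le_of_le_one_right (norm_nonneg (f x)) hx

theorem norm_integral_mul_le_integral_norm (hf : Integrable f μ) {g : α → ℝ}
    (hg : ∀ᵐ x ∂μ, ‖g x‖ ≤ 1) : ‖∫ x, f x * g x ∂μ‖ ≤ ∫ x, ‖f x‖ ∂μ :=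
  (norm_integral_le_integral_norm _).trans (integral_norm_mul_le_integral_norm hf hg)

theorem hasSum_integral_mul_tsum (hf : Integrable f μ)
    (hG : ∀ n, AEStronglyMeasurable (G n) μ) (hG1 : ∀ n, ∀ᵐ x ∂μ, ‖G n x‖ ≤ 1)
    (hc : Summable fun n ↦ ‖c n‖) :
    HasSum (fun n ↦ c n * ∫ x, f x * G n x ∂μ) (∫ x, f x * ∑' n, c n * G n x ∂μ) := by
  have hint n : Integrable (fun x ↦ c n * (f x * G n x)) μ :=
    (hf.mul_bdd (hG n) (hG1 n)).const_mul _
  have hsum : Summable fun n ↦ ∫ x, ‖c n * (f x * G n x)‖ ∂μ := by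
    refine .of_nonneg_of_le (fun n ↦ integral_nonneg fun _ ↦ norm_nonneg _) (fun n ↦ ?_)
      (hc.mul_right (∫ x, ‖f x‖ ∂μ))
    simp_rw [norm_mul (c n), integral_const_mul]
    exact mul_le_mul_of_nonneg_left (integral_norm_mul_le_integral_norm hf (hG1 n))
      (norm_nonneg _)
  have h := hasSum_integral_of_summable_integral_norm hint hsum
  simp_rw [integral_const_mul] at h
  have hfun : (fun x ↦ f x * ∑' n, c n * G n x) = fun x ↦ ∑' n, c n * (f x * G n x) := by
    ext x
    rw [← tsum_mul_left]
    congr 1 with n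
    ring
  rwa [hfun]

theorem hasSum_integral_integral_mul_tsum (hf : Integrable f μ)
    (hG : ∀ n, AEStronglyMeasurable (G n) μ) (hG1 : ∀ n, ∀ᵐ x ∂μ, ‖G n x‖ ≤ 1)
    (hc : Summable fun n ↦ ‖c n‖) :
    HasSum (fun n ↦ c n * (∫ x, f x * G n x ∂μ) ^ 2)
      (∫ x, ∫ y, f x * (f y * ∑' n, c n * (G n x * G n y)) ∂μ ∂μ) := by
  set M := fun n ↦ ∫ x, f x * G n x ∂μ
  have hinner : ∀ᵐ x ∂μ,
      ∫ y, f x * (f y * ∑' n, c n * (G n x * G n y)) ∂μ = f x * ∑' n, (c n * M n) * G n x := by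
    filter_upwards [ae_all_iff.2 hG1] with x hx
    have hcx : Summable fun n ↦ ‖c n * G n x‖ :=
      hc.of_nonneg_of_le (fun _ ↦ norm_nonneg _) fun n ↦ by
        simpa [norm_mul] using mul_le_of_le_one_right (norm_nonneg (c n)) (hx n)
    rw [integral_const_mul]
    congr 1
    calc ∫ y, f y * ∑' n, c n * (G n x * G n y) ∂μ
        = ∫ y, f y * ∑' n, (c n * G n x) * G n y ∂μ := by simp_rw [mul_assoc]
      _ = ∑' n, (c n * G n x) * M n := (hasSum_integral_mul_tsum hf hG hG1 hcx).tsum_eq.symm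
      _ = ∑' n, (c n * M n) * G n x := tsum_congr fun n ↦ by ring
  have hcM : Summable fun n ↦ ‖c n * M n‖ :=
    (hc.mul_right (∫ x, ‖f x‖ ∂μ)).of_nonneg_of_le (fun _ ↦ norm_nonneg _) fun n ↦ by
      rw [norm_mul]
      exact mul_le_mul_of_nonneg_left (norm_integral_mul_le_integral_norm hf (hG1 n))
        (norm_nonneg _)
  rw [integral_congr_ae hinner]
  simpa only [mul_assoc, sq] using hasSum_integral_mul_tsum hf hG hG1 hcM

end SeriesUnderIntegral

theorem Real.exp_sub_one_eq_tsum (x : ℝ) :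
    exp x - 1 = ∑' n : ℕ, x ^ (n + 1) / (n + 1).factorial := by
  rw [exp_eq_exp_ℝ, NormedSpace.exp_eq_tsum_div]
  dsimp only
  rw [(Real.summable_pow_div_factorial x).tsum_eq_zero_add]
  simp

theorem Real.summable_norm_pow_succ_div_factorial (x : ℝ) :
    Summable fun n : ℕ ↦ ‖x ^ (n + 1) / (n + 1).factorial‖ := by
  simpa [norm_div, norm_pow] using
    (summable_nat_add_iff 1).2 (Real.summable_pow_div_factorial ‖x‖)

theorem integrableOn_rpow_mul_Ioo_zero_one {r : ℝ} (hr : -1 < r) {h : ℝ → ℝ}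
    (hh : ContinuousOn h (Set.Icc 0 1)) :
    IntegrableOn (fun t ↦ t ^ r * h t) (Set.Ioo 0 1) :=
  ((intervalIntegral.integrableOn_Ioo_rpow_iff zero_lt_one).2 hr).mul_continuousOn_of_subset hh
    measurableSet_Ioo isCompact_Icc Set.Ioo_subset_Icc_self

theorem rpow_mul_exp_mul_exp_sub_one_eq_tsum {a b t u : ℝ} (ht : 0 ≤ t) (hu : 0 ≤ u) :
    (u * t) ^ (a - 1) * exp (b * (2 - t - u)) * (exp (-(b * (1 - t) * (1 - u))) - 1) =
      t ^ (a - 1) * exp ((1 - t) * b) * (u ^ (a - 1) * exp ((1 - u) * b) *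
        ∑' n : ℕ, (-b) ^ (n + 1) / (n + 1).factorial *
          ((1 - t) ^ (n + 1) * (1 - u) ^ (n + 1))) := by
  rw [Real.mul_rpow hu ht, show b * (2 - t - u) = (1 - t) * b + (1 - u) * b by ring, exp_add,
    Real.exp_sub_one_eq_tsum, show -(b * (1 - t) * (1 - u)) = -b * ((1 - t) * (1 - u)) by ring]
  simp_rw [mul_pow, div_mul_eq_mul_div]
  ring

theorem series_double_integral_identity_general (y lam : ℝ)
    (ha : 0 < y ^ 2 + lam * y)
    (J : ℕ → ℝ)
    (hJ : ∀ m : ℕ, J m =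
      ∫ t in Set.Ioo (0 : ℝ) 1,
        t ^ (y ^ 2 + lam * y - 1) * Real.exp ((1 - t) * y ^ 2) * (1 - t) ^ m) :
    Summable (fun n : ℕ => (-y ^ 2) ^ (n + 1) * (J (n + 1)) ^ 2 / ((n + 1).factorial : ℝ)) ∧
    (∑' n : ℕ, (-y ^ 2) ^ (n + 1) * (J (n + 1)) ^ 2 / ((n + 1).factorial : ℝ)) =
      ∫ t in Set.Ioo (0 : ℝ) 1, ∫ u in Set.Ioo (0 : ℝ) 1,
        (u * t) ^ (y ^ 2 + lam * y - 1) * Real.exp (y ^ 2 * (2 - t - u)) *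
          (Real.exp (-(y ^ 2 * (1 - t) * (1 - u))) - 1) := by
  have hf : IntegrableOn (fun t ↦ t ^ (y ^ 2 + lam * y - 1) * exp ((1 - t) * y ^ 2))
      (Set.Ioo 0 1) :=
    integrableOn_rpow_mul_Ioo_zero_one (by linarith) (by fun_prop)
  have hG1 (n : ℕ) : ∀ᵐ t ∂volume.restrict (Set.Ioo (0 : ℝ) 1), ‖(1 - t) ^ (n + 1)‖ ≤ 1 :=
    ae_restrict_of_forall_mem measurableSet_Ioo fun t ⟨ht0, ht1⟩ ↦ by
      rw [norm_pow, Real.norm_of_nonneg (by linarith)]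
      exact pow_le_one₀ (by linarith) (by linarith)
  have key := hasSum_integral_integral_mul_tsum hf (fun n ↦ by fun_prop) hG1
    (Real.summable_norm_pow_succ_div_factorial (-y ^ 2))
  simp only [← hJ] at key
  simp only [mul_div_right_comm _ (J _ ^ 2)]
  rw [setIntegral_congr_fun measurableSet_Ioo fun t ht ↦ setIntegral_congr_fun measurableSet_Ioo
    fun u hu ↦ rpow_mul_exp_mul_exp_sub_one_eq_tsum ht.1.le hu.1.le]
  exact ⟨key.summable, key.tsum_eq⟩

/-- With `a = y² + λy > 0` and `J_n = ∫₀¹ t^(a-1) e^((1-t)y²) (1-t)^n dt`, the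
series `Σ_{n≥1} (-y²)^n J_n² / n!` converges absolutely and equals the double
integral `∬₀¹ (ut)^(a-1) e^(y²(2-t-u)) (e^(-y²(1-t)(1-u)) - 1) du dt`, obtained
by expanding the exponential series under the integral sign. -/
theorem series_double_integral_identity (y lam : ℝ) (hy : 0 < y)
    (ha : 0 < y ^ 2 + lam * y)
    (J : ℕ → ℝ)
    (hJ : ∀ m : ℕ, J m =
      ∫ t in Set.Ioo (0 : ℝ) 1,
        t ^ (y ^ 2 + lam * y - 1) * Real.exp ((1 - t) * y ^ 2) * (1 - t) ^ m) :
    Summable (fun n : ℕ => (-y ^ 2) ^ (n + 1) * (J (n + 1)) ^ 2 / ((n + 1).factorial : ℝ)) ∧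
    (∑' n : ℕ, (-y ^ 2) ^ (n + 1) * (J (n + 1)) ^ 2 / ((n + 1).factorial : ℝ)) =
      ∫ t in Set.Ioo (0 : ℝ) 1, ∫ u in Set.Ioo (0 : ℝ) 1,
        (u * t) ^ (y ^ 2 + lam * y - 1) * Real.exp (y ^ 2 * (2 - t - u)) *
          (Real.exp (-(y ^ 2 * (1 - t) * (1 - u))) - 1) :=
  series_double_integral_identity_general y lam ha J hJ
end

section
/- With a = y² + λy > 0 and J_n = ∫₀¹ t^{a-1} e^{(1-t)y²}(1-t)^n dt, one has the identity Σ_{n≥1} (-y²)^n J_n²/n! = Σ_{n≥1} J_n/n - J_0². -/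
/-!
Both sides equal `∫₀¹ g(u) (-log u) du` with `g(t) = t^(a-1) e^((1-t)y²)`. On the right, expand
`-log t = Σ_{n≥1} (1-t)^n / n` under the integral. On the left, `J_n² = ∬ g(s) g(t) ((1-s)(1-t))^n`,
so the series sums to `∬ g(s) g(t) e^(-y²(1-s)(1-t)) = ∬ g(st) ds dt`, and the substitution
`u = st` followed by Fubini on `{0 < u < s < 1}` turns this into `∫₀¹ g(u) ∫ᵤ¹ ds/s du`.
-/

open MeasureTheory Real Set
open scoped Nat

lemma integral_Ioo_inv_eq_neg_log {u : ℝ} (hu : u ∈ Ioo (0 : ℝ) 1) :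
    ∫ s in Ioo u 1, s⁻¹ = -log u := by
  rw [← integral_Ioc_eq_integral_Ioo, ← intervalIntegral.integral_of_le hu.2.le,
    integral_inv_of_pos hu.1 one_pos, one_div, log_inv]

lemma hasSum_one_sub_pow_succ_div {t : ℝ} (ht : t ∈ Ioo (0 : ℝ) 1) :
    HasSum (fun n : ℕ => (1 - t) ^ (n + 1) / (n + 1)) (-log t) := by
  have := hasSum_pow_div_log_of_abs_lt_one (x := 1 - t)
    (abs_lt.2 ⟨by linarith [ht.2], by linarith [ht.1]⟩)
  rwa [sub_sub_cancel] at this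

lemma hasSum_integral_mul_pow_succ_div {h : ℝ → ℝ}
    (hm : AEStronglyMeasurable h (volume.restrict (Ioo 0 1)))
    (hlog : IntegrableOn (fun t => h t * log t) (Ioo 0 1)) :
    HasSum (fun n : ℕ => (∫ t in Ioo 0 1, h t * (1 - t) ^ (n + 1)) / (n + 1))
      (∫ t in Ioo 0 1, h t * -log t) := by
  simp_rw [← integral_div, mul_div_assoc]
  refine hasSum_integral_of_dominated_convergence
    (fun n t => ‖h t‖ * ((1 - t) ^ (n + 1) / (n + 1))) (fun n => by fun_prop) (fun n => ?_)
    ?_ ?_ ?_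
  · filter_upwards [ae_restrict_mem measurableSet_Ioo] with t ht
    rw [norm_mul, norm_of_nonneg (div_nonneg (pow_nonneg (sub_nonneg.2 ht.2.le) _) (by positivity))]
  · filter_upwards [ae_restrict_mem measurableSet_Ioo] with t ht
    exact (hasSum_one_sub_pow_succ_div ht).summable.mul_left _
  · refine hlog.norm.congr ?_
    filter_upwards [ae_restrict_mem measurableSet_Ioo] with t ht
    rw [(hasSum_one_sub_pow_succ_div ht).summable.tsum_mul_left,
      (hasSum_one_sub_pow_succ_div ht).tsum_eq, norm_mul,
      norm_of_nonpos (log_nonpos ht.1.le ht.2.le)]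
  · filter_upwards [ae_restrict_mem measurableSet_Ioo] with t ht
    exact (hasSum_one_sub_pow_succ_div ht).mul_left (h t)

noncomputable def triangleKernel (h : ℝ → ℝ) (p : ℝ × ℝ) : ℝ :=
  if p.2 < p.1 then p.1⁻¹ * h p.2 else 0

lemma measurable_triangleKernel {h : ℝ → ℝ} (hm : Measurable h) :
    Measurable (triangleKernel h) :=
  Measurable.ite (measurableSet_lt measurable_snd measurable_fst)
    (measurable_fst.inv.mul (hm.comp measurable_snd)) measurable_const

lemma norm_triangleKernel (h : ℝ → ℝ) {s : ℝ} (hs : 0 < s) (u : ℝ) :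
    ‖triangleKernel h (s, u)‖ = triangleKernel (fun u => ‖h u‖) (s, u) := by
  unfold triangleKernel
  split_ifs <;> simp [abs_of_pos hs]

lemma triangleKernel_fst_eq_indicator (h : ℝ → ℝ) (u : ℝ) :
    (fun s => triangleKernel h (s, u)) = (Ioi u).indicator (fun s => s⁻¹ * h u) := by
  ext s
  simp [triangleKernel, indicator_apply]

lemma triangleKernel_snd_eq_indicator (h : ℝ → ℝ) (s : ℝ) :
    (fun u => triangleKernel h (s, u)) = (Iio s).indicator (fun u => s⁻¹ * h u) := by
  ext u
  simp [triangleKernel, indicator_apply]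

lemma integral_triangleKernel_fst (h : ℝ → ℝ) {u : ℝ} (hu : u ∈ Ioo (0 : ℝ) 1) :
    ∫ s in Ioo 0 1, triangleKernel h (s, u) = h u * -log u := by
  rw [triangleKernel_fst_eq_indicator, integral_indicator measurableSet_Ioi,
    Measure.restrict_restrict measurableSet_Ioi, Ioi_inter_Ioo, max_eq_left hu.1.le,
    integral_mul_const, integral_Ioo_inv_eq_neg_log hu, mul_comm]

lemma integral_triangleKernel_snd (h : ℝ → ℝ) {s : ℝ} (hs : s ∈ Ioo (0 : ℝ) 1) :
    ∫ u in Ioo 0 1, triangleKernel h (s, u) = ∫ t in Ioo 0 1, h (s * t) := by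
  rw [triangleKernel_snd_eq_indicator, integral_indicator measurableSet_Iio,
    Measure.restrict_restrict measurableSet_Iio, Iio_inter_Ioo, min_eq_left hs.2.le,
    integral_const_mul, ← integral_Ioc_eq_integral_Ioo, ← integral_Ioc_eq_integral_Ioo,
    ← intervalIntegral.integral_of_le hs.1.le, ← intervalIntegral.integral_of_le zero_le_one,
    intervalIntegral.integral_comp_mul_left _ hs.1.ne', mul_zero, mul_one, smul_eq_mul]

lemma integrable_triangleKernel {h : ℝ → ℝ} (hm : Measurable h)
    (hlog : IntegrableOn (fun u => h u * log u) (Ioo 0 1)) :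
    Integrable (triangleKernel h)
      ((volume.restrict (Ioo (0 : ℝ) 1)).prod (volume.restrict (Ioo (0 : ℝ) 1))) := by
  refine (integrable_prod_iff' (measurable_triangleKernel hm).aestronglyMeasurable).2 ⟨?_, ?_⟩
  · filter_upwards [ae_restrict_mem measurableSet_Ioo] with u hu
    rw [triangleKernel_fst_eq_indicator, integrable_indicator_iff measurableSet_Ioi, IntegrableOn,
      Measure.restrict_restrict measurableSet_Ioi, Ioi_inter_Ioo, max_eq_left hu.1.le]
    refine Integrable.mul_const ?_ _
    exact (continuousOn_inv₀.mono fun s hs => (hu.1.trans_le hs.1).ne').integrableOn_Icc.mono_set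
      Ioo_subset_Icc_self
  · refine hlog.norm.congr ?_
    filter_upwards [ae_restrict_mem measurableSet_Ioo] with u hu
    rw [norm_mul, norm_of_nonpos (log_nonpos hu.1.le hu.2.le),
      ← integral_triangleKernel_fst (fun u => ‖h u‖) hu]
    exact setIntegral_congr_fun measurableSet_Ioo fun s hs => (norm_triangleKernel h hs.1 u).symm

lemma integrable_comp_mul_of_integrableOn_mul_log {h : ℝ → ℝ} (hm : Measurable h)
    (hlog : IntegrableOn (fun u => h u * log u) (Ioo 0 1)) :
    Integrable (fun p : ℝ × ℝ => h (p.1 * p.2))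
      ((volume.restrict (Ioo (0 : ℝ) 1)).prod (volume.restrict (Ioo (0 : ℝ) 1))) := by
  have hK := integrable_triangleKernel hm hlog
  have hmeas : Measurable fun p : ℝ × ℝ => h (p.1 * p.2) := by fun_prop
  refine (integrable_prod_iff hmeas.aestronglyMeasurable).2 ⟨?_, ?_⟩
  · filter_upwards [hK.prod_right_ae, ae_restrict_mem measurableSet_Ioo] with s hKs hs
    rw [triangleKernel_snd_eq_indicator, integrable_indicator_iff measurableSet_Iio, IntegrableOn,
      Measure.restrict_restrict measurableSet_Iio, Iio_inter_Ioo, min_eq_left hs.2.le] at hKs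
    have hh : IntervalIntegrable h volume 0 s := by
      rw [intervalIntegrable_iff_integrableOn_Ioo_of_le hs.1.le]
      simpa [hs.1.ne', IntegrableOn] using hKs.const_mul s
    have := hh.comp_mul_left (c := s)
    rwa [zero_div, div_self hs.1.ne', intervalIntegrable_iff_integrableOn_Ioo_of_le zero_le_one]
      at this
  · refine hK.integral_norm_prod_left.congr ?_
    filter_upwards [ae_restrict_mem measurableSet_Ioo] with s hs
    rw [← integral_triangleKernel_snd (fun u => ‖h u‖) hs]
    exact setIntegral_congr_fun measurableSet_Ioo fun u _ => norm_triangleKernel h hs.1 u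

lemma integral_comp_mul_eq_integral_mul_neg_log {h : ℝ → ℝ} (hm : Measurable h)
    (hlog : IntegrableOn (fun u => h u * log u) (Ioo 0 1)) :
    ∫ p, h (p.1 * p.2) ∂(volume.restrict (Ioo (0 : ℝ) 1)).prod (volume.restrict (Ioo (0 : ℝ) 1))
      = ∫ u in Ioo 0 1, h u * -log u := calc
  _ = ∫ s in Ioo 0 1, ∫ u in Ioo 0 1, triangleKernel h (s, u) := by
    rw [integral_prod _ (integrable_comp_mul_of_integrableOn_mul_log hm hlog)]
    exact setIntegral_congr_fun measurableSet_Ioo fun s hs =>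
      (integral_triangleKernel_snd h hs).symm
  _ = ∫ u in Ioo 0 1, ∫ s in Ioo 0 1, triangleKernel h (s, u) :=
    integral_integral_swap (integrable_triangleKernel hm hlog)
  _ = ∫ u in Ioo 0 1, h u * -log u :=
    setIntegral_congr_fun measurableSet_Ioo fun u hu => integral_triangleKernel_fst h hu

lemma hasSum_pow_mul_sq_integral_div_factorial {α : Type*} [MeasurableSpace α] {μ : Measure α}
    [SFinite μ] {f w : α → ℝ} (hf : Integrable f μ) (hw : AEStronglyMeasurable w μ)
    (hw1 : ∀ᵐ t ∂μ, |w t| ≤ 1) (x : ℝ) :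
    HasSum (fun n : ℕ => x ^ n * (∫ t, f t * w t ^ n ∂μ) ^ 2 / n !)
      (∫ p, f p.1 * f p.2 * exp (x * (w p.1 * w p.2)) ∂μ.prod μ) := by
  have hterm : ∀ n : ℕ, x ^ n * (∫ t, f t * w t ^ n ∂μ) ^ 2 / n !
      = ∫ p, x ^ n / n ! * ((f p.1 * w p.1 ^ n) * (f p.2 * w p.2 ^ n)) ∂μ.prod μ := by
    intro n
    rw [integral_const_mul, integral_prod_mul (fun t => f t * w t ^ n) (fun t => f t * w t ^ n)]
    ring
  rw [funext hterm]
  refine hasSum_integral_of_dominated_convergence (fun n p => |x| ^ n / n ! * (|f p.1| * |f p.2|))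
    (fun n => ?_) (fun n => ?_) ?_ ?_ ?_
  · exact ((hf.1.comp_fst.mul (hw.comp_fst.pow n)).mul
      (hf.1.comp_snd.mul (hw.comp_snd.pow n))).const_mul _
  · filter_upwards [Measure.quasiMeasurePreserving_fst.ae hw1,
      Measure.quasiMeasurePreserving_snd.ae hw1] with p h1 h2
    have hpow : |w p.1| ^ n * |w p.2| ^ n ≤ 1 :=
      mul_le_one₀ (pow_le_one₀ (abs_nonneg _) h1) (by positivity) (pow_le_one₀ (abs_nonneg _) h2)
    simp only [norm_mul, norm_div, norm_pow, norm_eq_abs, Nat.abs_cast]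
    calc _ = |x| ^ n / n ! * (|f p.1| * |f p.2|) * (|w p.1| ^ n * |w p.2| ^ n) := by ring
      _ ≤ _ := mul_le_of_le_one_right (by positivity) hpow
  · exact ae_of_all _ fun p => (summable_pow_div_factorial |x|).mul_right _
  · simp_rw [(summable_pow_div_factorial |x|).tsum_mul_right]
    exact (hf.abs.mul_prod hf.abs).const_mul _
  · refine ae_of_all _ fun p => ?_
    have hexp := (NormedSpace.expSeries_div_hasSum_exp (x * (w p.1 * w p.2))).mul_left
      (f p.1 * f p.2)
    rw [← exp_eq_exp_ℝ] at hexp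
    refine (funext fun n => ?_ : (fun n : ℕ => _) = _) ▸ hexp
    ring

lemma integrableOn_rpow_mul_log {r : ℝ} (hr : -1 < r) :
    IntegrableOn (fun t => t ^ r * log t) (Ioo 0 1) := by
  set ε := (r + 1) / 2
  have hε : 0 < ε := by simp only [ε]; linarith
  have hbound : IntegrableOn (fun t => ε⁻¹ * t ^ (r - ε)) (Ioo 0 1) :=
    ((intervalIntegral.integrableOn_Ioo_rpow_iff zero_lt_one).2
      (by simp only [ε]; linarith)).const_mul _
  refine hbound.mono' (by fun_prop) ?_
  filter_upwards [ae_restrict_mem measurableSet_Ioo] with t ht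
  have hsplit : t ^ r * log t = t ^ (r - ε) * (log t * t ^ ε) := by
    rw [mul_left_comm, ← rpow_add ht.1, sub_add_cancel, mul_comm]
  rw [hsplit, norm_mul, norm_of_nonneg (rpow_nonneg ht.1.le _), mul_comm, norm_eq_abs]
  exact mul_le_mul_of_nonneg_right ((abs_log_mul_self_rpow_lt t ε ht.1 ht.2.le hε).le.trans
    (by rw [one_div])) (rpow_nonneg ht.1.le _)

noncomputable def powMulExp (a b t : ℝ) : ℝ := t ^ (a - 1) * exp ((1 - t) * b)

lemma measurable_powMulExp (a b : ℝ) : Measurable (powMulExp a b) := by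
  unfold powMulExp
  fun_prop

lemma norm_exp_one_sub_mul_le (b : ℝ) {t : ℝ} (ht : t ∈ Ioo (0 : ℝ) 1) :
    ‖exp ((1 - t) * b)‖ ≤ exp |b| := by
  rw [norm_of_nonneg (exp_nonneg _), exp_le_exp]
  calc (1 - t) * b ≤ |(1 - t) * b| := le_abs_self _
    _ = (1 - t) * |b| := by rw [abs_mul, abs_of_pos (sub_pos.2 ht.2)]
    _ ≤ |b| := mul_le_of_le_one_left (abs_nonneg b) (by linarith [ht.1])

lemma integrableOn_powMulExp {a : ℝ} (ha : 0 < a) (b : ℝ) :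
    IntegrableOn (powMulExp a b) (Ioo 0 1) :=
  ((intervalIntegral.integrableOn_Ioo_rpow_iff zero_lt_one).2 (by linarith)).mul_bdd
    (by fun_prop) ((ae_restrict_mem measurableSet_Ioo).mono fun _ => norm_exp_one_sub_mul_le b)

lemma integrableOn_powMulExp_mul_log {a : ℝ} (ha : 0 < a) (b : ℝ) :
    IntegrableOn (fun t => powMulExp a b t * log t) (Ioo 0 1) := by
  have := (integrableOn_rpow_mul_log (r := a - 1) (by linarith)).mul_bdd (by fun_prop)
    ((ae_restrict_mem measurableSet_Ioo).mono fun _ => norm_exp_one_sub_mul_le b)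
  refine this.congr (ae_of_all _ fun t => ?_)
  simp only [powMulExp]
  ring

lemma powMulExp_mul_powMulExp (a b : ℝ) {s t : ℝ} (hs : 0 < s) (ht : 0 < t) :
    powMulExp a b s * powMulExp a b t * exp (-b * ((1 - s) * (1 - t))) =
      powMulExp a b (s * t) := by
  have hexp : exp ((1 - s * t) * b) =
      exp ((1 - s) * b) * exp ((1 - t) * b) * exp (-b * ((1 - s) * (1 - t))) := by
    rw [← exp_add, ← exp_add]
    ring_nf
  simp only [powMulExp, mul_rpow hs.le ht.le, hexp]
  ring

lemma integral_powMulExp_mul_powMulExp (a b : ℝ) :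
    ∫ p, powMulExp a b p.1 * powMulExp a b p.2 * exp (-b * ((1 - p.1) * (1 - p.2)))
        ∂(volume.restrict (Ioo (0 : ℝ) 1)).prod (volume.restrict (Ioo (0 : ℝ) 1)) =
      ∫ p, powMulExp a b (p.1 * p.2)
        ∂(volume.restrict (Ioo (0 : ℝ) 1)).prod (volume.restrict (Ioo (0 : ℝ) 1)) := by
  refine integral_congr_ae ?_
  filter_upwards [Measure.quasiMeasurePreserving_fst.ae (ae_restrict_mem measurableSet_Ioo),
    Measure.quasiMeasurePreserving_snd.ae (ae_restrict_mem measurableSet_Ioo)] with p h1 h2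
  exact powMulExp_mul_powMulExp a b h1.1 h2.1

theorem series_identity_Jn_general (y lam : ℝ) (ha : 0 < y ^ 2 + lam * y)
    (J : ℕ → ℝ)
    (hJ : ∀ m : ℕ, J m =
      ∫ t in Set.Ioo (0 : ℝ) 1,
        t ^ (y ^ 2 + lam * y - 1) * Real.exp ((1 - t) * y ^ 2) * (1 - t) ^ m) :
    (∑' n : ℕ, (-y ^ 2) ^ (n + 1) * (J (n + 1)) ^ 2 / ((n + 1).factorial : ℝ)) + (J 0) ^ 2 =
      ∑' n : ℕ, J (n + 1) / ((n : ℝ) + 1) := by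
  have hJ' : ∀ m, J m = ∫ t in Ioo 0 1, powMulExp (y ^ 2 + lam * y) (y ^ 2) t * (1 - t) ^ m := hJ
  have hlog := integrableOn_powMulExp_mul_log ha (y ^ 2)
  have hRHS := hasSum_integral_mul_pow_succ_div (measurable_powMulExp _ _).aestronglyMeasurable hlog
  have hw : ∀ᵐ t ∂volume.restrict (Ioo (0 : ℝ) 1), |1 - t| ≤ 1 :=
    (ae_restrict_mem measurableSet_Ioo).mono fun t ht =>
      abs_le.2 ⟨by linarith [ht.2], by linarith [ht.1]⟩
  have hLHS := hasSum_pow_mul_sq_integral_div_factorial (integrableOn_powMulExp ha (y ^ 2))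
    (by fun_prop) hw (-y ^ 2)
  rw [integral_powMulExp_mul_powMulExp, integral_comp_mul_eq_integral_mul_neg_log
    (measurable_powMulExp _ _) hlog, ← hRHS.tsum_eq] at hLHS
  simp only [← hJ'] at hLHS
  rw [← hLHS.tsum_eq, hLHS.summable.tsum_eq_zero_add, pow_zero, one_mul, Nat.factorial_zero,
    Nat.cast_one, div_one, add_comm]

/-- With `a = y² + λy > 0` and `J_n = ∫₀¹ t^(a-1) e^((1-t)y²) (1-t)^n dt`, one has
`Σ_{n≥1} (-y²)^n J_n²/n! + J₀² = Σ_{n≥1} J_n/n`. -/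
theorem series_identity_Jn (y lam : ℝ) (hy : 0 < y) (ha : 0 < y ^ 2 + lam * y)
    (J : ℕ → ℝ)
    (hJ : ∀ m : ℕ, J m =
      ∫ t in Set.Ioo (0 : ℝ) 1,
        t ^ (y ^ 2 + lam * y - 1) * Real.exp ((1 - t) * y ^ 2) * (1 - t) ^ m) :
    (∑' n : ℕ, (-y ^ 2) ^ (n + 1) * (J (n + 1)) ^ 2 / ((n + 1).factorial : ℝ)) + (J 0) ^ 2 =
      ∑' n : ℕ, J (n + 1) / ((n : ℝ) + 1) :=
  series_identity_Jn_general y lam ha J hJ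
end

section
/- The derivative of the dispersion function Λ(y,λ) = 1 - (c y²/2π) J_1(y,-λy) with respect to λ is ∂_λ Λ = (cy/2π)(J_0(y,-λy) - λy Σ_{n≥1} J_n(y,-λy)/n), where J_n(y,-λy) = ∫₀¹ t^{y²+λy-1} e^{(1-t)y²}(1-t)^n dt. -/
/-!
Differentiating under the integral sign gives
`∂_λ J₁ = y ∫₀¹ t^(a-1) e^((1-t)y²) (1-t) log t`. Integrating `d/dt (t^a e^((1-t)y²) log t)`
over `(0,1)`, whose boundary terms vanish as `a > 0`, expresses `y²` times this integral
through `J₀` and `λy ∫₀¹ t^(a-1) e^((1-t)y²) log t`; and the expansion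
`-log t = Σ (1-t)^(n+1)/(n+1)` turns the last integral into `-Σ J_(n+1)/(n+1)`.
-/

open MeasureTheory Real Set Filter Topology

lemma continuousOn_rpow_mul_log {c : ℝ} (hc : 0 < c) :
    ContinuousOn (fun t : ℝ => t ^ c * log t) (Icc 0 1) := by
  intro t ht
  rcases ht.1.eq_or_lt with rfl | htpos
  · rw [← continuousWithinAt_sdiff_self, Icc_sdiff_left, ContinuousWithinAt,
      nhdsWithin_Ioc_eq_nhdsGT zero_lt_one, log_zero, mul_zero]
    simpa only [mul_comm] using tendsto_log_mul_rpow_nhdsGT_zero hc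
  · exact ((continuousAt_rpow_const t c (Or.inl htpos.ne')).mul
      (continuousAt_log htpos.ne')).continuousWithinAt

lemma integrableOn_rpow_sub_one_mul {g : ℝ → ℝ} {s : ℝ} (hs : 0 < s)
    (hg : ContinuousOn g (Icc 0 1)) :
    IntegrableOn (fun t => t ^ (s - 1) * g t) (Ioo 0 1) :=
  ((intervalIntegral.integrableOn_Ioo_rpow_iff zero_lt_one).2
    (by linarith)).mul_continuousOn_of_subset hg measurableSet_Ioo isCompact_Icc Ioo_subset_Icc_self

lemma integrableOn_rpow_sub_one_mul_log {g : ℝ → ℝ} {s : ℝ} (hs : 0 < s)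
    (hg : ContinuousOn g (Icc 0 1)) :
    IntegrableOn (fun t => t ^ (s - 1) * g t * log t) (Ioo 0 1) := by
  -- `t^(s-1) log t = t^(s/2-1) (t^(s/2) log t)`, and the second factor is continuous on `[0,1]`.
  have h := integrableOn_rpow_sub_one_mul (half_pos hs)
    ((continuousOn_rpow_mul_log (half_pos hs)).mul hg)
  refine h.congr_fun (fun t ht => ?_) measurableSet_Ioo
  have hpow : t ^ (s - 1) = t ^ (s / 2 - 1) * t ^ (s / 2) := by
    rw [← rpow_add ht.1]; ring_nf
  simp only [Pi.mul_apply, hpow]; ring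

lemma hasDerivAt_integral_rpow_sub_one_mul {g : ℝ → ℝ} {s : ℝ} (hs : 0 < s)
    (hg : ContinuousOn g (Icc 0 1)) :
    HasDerivAt (fun r => ∫ t in Ioo 0 1, t ^ (r - 1) * g t)
      (∫ t in Ioo 0 1, t ^ (s - 1) * g t * log t) s := by
  have hmeas : ∀ r : ℝ, AEStronglyMeasurable (fun t => t ^ (r - 1) * g t)
      (volume.restrict (Ioo 0 1)) := fun r => by
    have hpow : ContinuousOn (fun t : ℝ => t ^ (r - 1)) (Ioo 0 1) :=
      continuousOn_id.rpow_const fun t ht => Or.inl ht.1.ne'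
    exact (hpow.mul (hg.mono Ioo_subset_Icc_self)).aestronglyMeasurable measurableSet_Ioo
  refine (hasDerivAt_integral_of_dominated_loc_of_deriv_le
    (F' := fun r t => t ^ (r - 1) * g t * log t) (Ioi_mem_nhds (half_lt_self hs))
    (Eventually.of_forall hmeas) (integrableOn_rpow_sub_one_mul hs hg)
    (integrableOn_rpow_sub_one_mul_log hs hg).aestronglyMeasurable ?_
    (integrableOn_rpow_sub_one_mul_log (half_pos hs) hg).norm ?_).2
  · rw [ae_restrict_iff' measurableSet_Ioo]
    refine Eventually.of_forall fun t ht r hr => ?_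
    have hpow : t ^ (r - 1) ≤ t ^ (s / 2 - 1) :=
      rpow_le_rpow_of_exponent_ge ht.1 ht.2.le (by linarith [mem_Ioi.1 hr])
    simp only [norm_mul, norm_of_nonneg (rpow_pos_of_pos ht.1 _).le]
    gcongr
  · rw [ae_restrict_iff' measurableSet_Ioo]
    refine Eventually.of_forall fun t ht r _ => ?_
    exact (((hasStrictDerivAt_const_rpow ht.1 (r - 1)).hasDerivAt.comp_sub_const r 1).mul_const
      (g t)).congr_deriv (mul_right_comm _ _ _)

lemma hasSum_integral_mul_one_sub_pow_div {h : ℝ → ℝ}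
    (hh : AEStronglyMeasurable h (volume.restrict (Ioo 0 1)))
    (hlog : IntegrableOn (fun t => h t * log t) (Ioo 0 1)) :
    HasSum (fun n : ℕ => (∫ t in Ioo 0 1, h t * (1 - t) ^ (n + 1)) / (n + 1))
      (-∫ t in Ioo 0 1, h t * log t) := by
  have hseries : ∀ t ∈ Ioo (0 : ℝ) 1,
      HasSum (fun n : ℕ => (1 - t) ^ (n + 1) / (n + 1)) (-log t) := fun t ht => by
    simpa using hasSum_pow_div_log_of_abs_lt_one (x := 1 - t)
      (abs_lt.2 ⟨by linarith [ht.2], by linarith [ht.1]⟩)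
  simp_rw [← integral_div, mul_div_assoc, ← integral_neg]
  refine hasSum_integral_of_dominated_convergence
    (fun n t => ‖h t‖ * ((1 - t) ^ (n + 1) / (n + 1))) (fun n => ?_) (fun n => ?_) ?_ ?_ ?_
  · have hpow : Continuous fun t : ℝ => (1 - t) ^ (n + 1) / (n + 1) := by fun_prop
    exact hh.mul hpow.aestronglyMeasurable
  · rw [ae_restrict_iff' measurableSet_Ioo]
    refine Eventually.of_forall fun t ht => ?_
    have ht' : 0 ≤ 1 - t := by linarith [ht.2]
    rw [norm_mul, norm_of_nonneg (by positivity : 0 ≤ (1 - t) ^ (n + 1) / (n + 1))]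
  · rw [ae_restrict_iff' measurableSet_Ioo]
    exact Eventually.of_forall fun t ht => ((hseries t ht).mul_left _).summable
  · refine IntegrableOn.congr_fun hlog.norm (fun t ht => ?_) measurableSet_Ioo
    rw [((hseries t ht).mul_left _).tsum_eq, norm_mul, norm_of_nonpos (log_nonpos ht.1.le ht.2.le)]
  · rw [ae_restrict_iff' measurableSet_Ioo]
    refine Eventually.of_forall fun t ht => ?_
    simpa only [mul_neg] using (hseries t ht).mul_left (h t)

lemma integral_rpow_sub_one_mul_log_of_hasDerivAt {w w' : ℝ → ℝ} {a : ℝ} (ha : 0 < a)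
    (hw : ContinuousOn w (Icc 0 1)) (hw' : ContinuousOn w' (Icc 0 1))
    (hderiv : ∀ t ∈ Ioo 0 1, HasDerivAt w (w' t) t) :
    ∫ t in Ioo 0 1, t ^ (a - 1) * (a * w t + t * w' t) * log t =
      -∫ t in Ioo 0 1, t ^ (a - 1) * w t := by
  have hint₁ : IntegrableOn (fun t => t ^ (a - 1) * (a * w t + t * w' t) * log t) (Ioo 0 1) :=
    integrableOn_rpow_sub_one_mul_log ha
      ((continuousOn_const.mul hw).add (continuousOn_id.mul hw'))
  have hint₂ := integrableOn_rpow_sub_one_mul ha hw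
  have hF : ∀ t ∈ Ioo (0 : ℝ) 1, HasDerivAt (fun t => t ^ a * log t * w t)
      (t ^ (a - 1) * (a * w t + t * w' t) * log t + t ^ (a - 1) * w t) t := fun t ht => by
    have h := ((hasDerivAt_rpow_const (p := a) (Or.inl ht.1.ne')).fun_mul
      (hasDerivAt_log ht.1.ne')).fun_mul (hderiv t ht)
    refine h.congr_deriv ?_
    have ht0 : t ≠ 0 := ht.1.ne'
    rw [rpow_sub_one ht0]
    field_simp
    ring
  have hFTC := intervalIntegral.integral_eq_sub_of_hasDerivAt_of_le zero_le_one
    ((continuousOn_rpow_mul_log ha).mul hw) hF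
    ((intervalIntegrable_iff_integrableOn_Ioo_of_le zero_le_one).2 (hint₁.add hint₂))
  rw [intervalIntegral.integral_of_le zero_le_one, integral_Ioc_eq_integral_Ioo,
    integral_add hint₁ hint₂] at hFTC
  simp only [Pi.mul_apply, one_rpow, log_one, mul_zero, zero_mul, log_zero, sub_self] at hFTC
  linarith

theorem dispersion_derivative_general (c y lam : ℝ) (ha : 0 < y ^ 2 + lam * y)
    (J : ℕ → ℝ → ℝ)
    (hJ : ∀ (m : ℕ) (μ : ℝ), J m μ =
      ∫ t in Set.Ioo (0 : ℝ) 1,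
        t ^ (y ^ 2 + μ * y - 1) * Real.exp ((1 - t) * y ^ 2) * (1 - t) ^ m) :
    HasDerivAt (fun μ : ℝ => 1 - c * y ^ 2 / (2 * π) * J 1 μ)
      (c * y / (2 * π) *
        (J 0 lam - lam * y * ∑' n : ℕ, J (n + 1) lam / ((n : ℝ) + 1))) lam := by
  set a := y ^ 2 + lam * y
  set E : ℝ → ℝ := fun t => exp ((1 - t) * y ^ 2)
  have hE : Continuous E := by fun_prop
  have hJ1 : J 1 = (fun s => ∫ t in Ioo 0 1, t ^ (s - 1) * (E t * (1 - t))) ∘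
      fun μ : ℝ => y ^ 2 + μ * y := by
    ext μ; simp only [hJ, pow_one, mul_assoc, Function.comp_apply, E]
  have hderiv : HasDerivAt (J 1)
      ((∫ t in Ioo 0 1, t ^ (a - 1) * (E t * (1 - t)) * log t) * y) lam := by
    rw [hJ1]
    exact (hasDerivAt_integral_rpow_sub_one_mul ha (by fun_prop)).comp lam
      ((hasDerivAt_mul_const y).const_add (y ^ 2))
  have hsum : HasSum (fun n : ℕ => J (n + 1) lam / ((n : ℝ) + 1))
      (-∫ t in Ioo 0 1, t ^ (a - 1) * E t * log t) := by
    simpa only [hJ] using hasSum_integral_mul_one_sub_pow_div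
      (integrableOn_rpow_sub_one_mul ha hE.continuousOn).aestronglyMeasurable
      (integrableOn_rpow_sub_one_mul_log ha hE.continuousOn)
  have hE' : ∀ t, HasDerivAt E (-y ^ 2 * E t) t := fun t =>
    (((hasDerivAt_id t).const_sub 1).mul_const (y ^ 2)).exp.congr_deriv
      (by simp only [E, id]; ring_nf)
  have hJ0 : J 0 lam = ∫ t in Ioo 0 1, t ^ (a - 1) * E t := by
    simp only [hJ, pow_zero, mul_one, a, E]
  have hparts : y ^ 2 * (∫ t in Ioo 0 1, t ^ (a - 1) * (E t * (1 - t)) * log t) +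
      lam * y * (∫ t in Ioo 0 1, t ^ (a - 1) * E t * log t) = -J 0 lam := by
    rw [hJ0, ← integral_rpow_sub_one_mul_log_of_hasDerivAt ha hE.continuousOn
      (w' := fun t => -y ^ 2 * E t) (by fun_prop) fun t _ => hE' t,
      ← integral_const_mul, ← integral_const_mul, ← integral_add]
    · congr 1; ext t; ring
    · exact (integrableOn_rpow_sub_one_mul_log ha (by fun_prop)).const_mul _
    · exact (integrableOn_rpow_sub_one_mul_log ha hE.continuousOn).const_mul _
  rw [hsum.tsum_eq]
  refine ((hderiv.const_mul (c * y ^ 2 / (2 * π))).const_sub 1).congr_deriv ?_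
  linear_combination -(c * y / (2 * π)) * hparts

/-- The derivative in `λ` of the dispersion function
`Λ(y,λ) = 1 - (c y²/(2π)) J₁(y,-λy)`, with
`J_n(y,-λy) = ∫₀¹ t^(y²+λy-1) e^((1-t)y²) (1-t)^n dt`, is
`∂_λ Λ = (c y/(2π)) (J₀(y,-λy) - λ y Σ_{n≥1} J_n(y,-λy)/n)`. -/
theorem dispersion_derivative (c y lam : ℝ) (hy : 0 < y) (ha : 0 < y ^ 2 + lam * y)
    (J : ℕ → ℝ → ℝ)
    (hJ : ∀ (m : ℕ) (μ : ℝ), J m μ =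
      ∫ t in Set.Ioo (0 : ℝ) 1,
        t ^ (y ^ 2 + μ * y - 1) * Real.exp ((1 - t) * y ^ 2) * (1 - t) ^ m) :
    HasDerivAt (fun μ : ℝ => 1 - c * y ^ 2 / (2 * π) * J 1 μ)
      (c * y / (2 * π) *
        (J 0 lam - lam * y * ∑' n : ℕ, J (n + 1) lam / ((n : ℝ) + 1))) lam :=
  dispersion_derivative_general c y lam ha J hJ
end

section
/- Laplace-type asymptotics for a_n: with a_n(y,λ) = y^{n+1} ∫₀¹ e^{y²(x + ln(1-x)) + λ y ln(1-x)} x^n (1-x)^{-1} dx, if n, y → ∞ with n^{3/2}/y → 0 and λ√n → 0, then a_n(y,λ) e^{n/2 - (n/2)ln n} → √π. -/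
/-!
Substituting `x = (√n + t) / y` turns the normalized `a_n` into `∫ exp (E t) dt` over
`(-√n, y - √n)`, with `E = laplaceExponent n y λ`. Expanding both logarithms to second order
around the critical point `x* = √n / y` gives `E t = -t² + O(|t|³/√n + n^{3/2}/y + λ√n)`, while
`log (1 + u) ≤ u` and `log (1 - v) ≤ -v - v²/2` give the uniform Gaussian bound
`E t ≤ 3/2 - t²/2`. Dominated convergence then yields `∫ exp (-t²) dt = √π`.
-/

open MeasureTheory Real Filter Topology

lemma log_one_sub_le_neg_sub_sq_div_two {v : ℝ} (h0 : 0 ≤ v) (h1 : v < 1) :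
    log (1 - v) ≤ -v - v ^ 2 / 2 := by
  have hs := hasSum_pow_div_log_of_abs_lt_one (x := v) (by rwa [abs_of_nonneg h0])
  have := sum_le_hasSum (Finset.range 2) (fun i _ => by positivity) hs
  norm_num [Finset.sum_range_succ] at this
  linarith

lemma abs_log_one_sub_le {x : ℝ} (h : |x| ≤ 1 / 2) : |log (1 - x)| ≤ 2 * |x| := by
  have := abs_log_sub_add_sum_range_le (h.trans_lt (by norm_num)) 0
  rw [Finset.sum_range_zero, zero_add, pow_one, le_div_iff₀ (by linarith)] at this
  nlinarith [abs_nonneg x, abs_nonneg (log (1 - x))]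

lemma abs_log_one_sub_add_add_sq_le {x : ℝ} (h : |x| ≤ 1 / 2) :
    |x + x ^ 2 / 2 + log (1 - x)| ≤ 2 * |x| ^ 3 := by
  have := abs_log_sub_add_sum_range_le (h.trans_lt (by norm_num)) 2
  norm_num [Finset.sum_range_succ] at this
  rw [le_div_iff₀ (by linarith)] at this
  nlinarith [pow_nonneg (abs_nonneg x) 3, abs_nonneg (x + x ^ 2 / 2 + log (1 - x))]

lemma abs_sq_mul_log_one_sub_div_add_le {a u : ℝ} (ha : 0 < a) (hu : 2 * |u| ≤ a) :
    |a ^ 2 * log (1 - u / a) + a * u + u ^ 2 / 2| ≤ 2 * |u| ^ 3 / a := by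
  have hx : |u / a| ≤ 1 / 2 := by
    rw [abs_div, abs_of_pos ha, div_le_iff₀ ha]; linarith
  calc |a ^ 2 * log (1 - u / a) + a * u + u ^ 2 / 2|
      = a ^ 2 * |u / a + (u / a) ^ 2 / 2 + log (1 - u / a)| := by
        rw [← abs_of_nonneg (sq_nonneg a), ← abs_mul, abs_of_nonneg (sq_nonneg a)]
        congr 1; field_simp; ring
    _ ≤ a ^ 2 * (2 * |u / a| ^ 3) := by gcongr; exact abs_log_one_sub_add_add_sq_le hx
    _ = 2 * |u| ^ 3 / a := by rw [abs_div, abs_of_pos ha]; field_simp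

noncomputable def laplaceExponent (n : ℕ) (y l t : ℝ) : ℝ :=
  n * log (√n + t) - n / 2 * log n + n / 2 + y * (√n + t)
    + (y ^ 2 + l * y - 1) * log (1 - (√n + t) / y)

noncomputable def laplaceIntegrand (n : ℕ) (y l : ℝ) : ℝ → ℝ :=
  Set.indicator (Set.Ioo (-√n) (y - √n)) fun t => exp (laplaceExponent n y l t)

lemma measurable_laplaceIntegrand (n : ℕ) (y l : ℝ) : Measurable (laplaceIntegrand n y l) :=
  Measurable.indicator (by unfold laplaceExponent; fun_prop) measurableSet_Ioo

lemma laplaceExponent_eq {n : ℕ} (hn : 0 < n) {y l t : ℝ} (ht : 0 < √n + t) :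
    laplaceExponent n y l t = n * log (1 + t / √n) + n / 2 + y * (√n + t)
      + (y ^ 2 + l * y - 1) * log (1 - (√n + t) / y) := by
  have hr : 0 < √(n : ℝ) := sqrt_pos.2 (Nat.cast_pos.2 hn)
  have hsplit : √(n : ℝ) + t = √n * (1 + t / √n) := by field_simp
  have hpos : 0 < 1 + t / √(n : ℝ) := by rw [one_add_div hr.ne']; exact div_pos ht hr
  have hlog : log (√(n : ℝ) + t) = log n / 2 + log (1 + t / √n) := by
    rw [hsplit, log_mul hr.ne' hpos.ne', log_sqrt (Nat.cast_nonneg n)]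
  rw [laplaceExponent, hlog]
  ring

lemma laplaceExponent_le {n : ℕ} (hn : 0 < n) {y l t : ℝ} (hy : 1 ≤ y) (hl : 0 ≤ l)
    (ht : t ∈ Set.Ioo (-√n) (y - √n)) : laplaceExponent n y l t ≤ 3 / 2 - t ^ 2 / 2 := by
  set r := √(n : ℝ)
  have hr : 0 < r := sqrt_pos.2 (Nat.cast_pos.2 hn)
  have hrr : r ^ 2 = n := sq_sqrt (Nat.cast_nonneg n)
  have hs : 0 < r + t := by linarith [ht.1]
  set v := (r + t) / y
  have hv0 : 0 < v := div_pos hs (by linarith)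
  have hv1 : v < 1 := (div_lt_one (by linarith)).2 (by linarith [ht.2])
  have hA : (n : ℝ) * log (1 + t / r) ≤ r * t := by
    have := log_le_sub_one_of_pos
      (show 0 < 1 + t / r by rw [one_add_div hr.ne']; exact div_pos hs hr)
    rw [← hrr]
    calc r ^ 2 * log (1 + t / r) ≤ r ^ 2 * (1 + t / r - 1) := by gcongr
      _ = r * t := by field_simp; ring
  have hL := log_one_sub_le_neg_sub_sq_div_two hv0.le hv1
  have hB : (y ^ 2 + l * y - 1) * log (1 - v) ≤ (y ^ 2 - 1) * (-v - v ^ 2 / 2) := by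
    have hlyL : l * y * log (1 - v) ≤ 0 :=
      mul_nonpos_of_nonneg_of_nonpos (by positivity) (log_nonpos (by linarith) (by linarith))
    have := mul_le_mul_of_nonneg_left hL (show 0 ≤ y ^ 2 - 1 by nlinarith)
    linarith
  have hyv : y * v = r + t := mul_div_cancel₀ _ (by positivity)
  rw [laplaceExponent_eq hn hs]
  nlinarith

lemma norm_laplaceIntegrand_le {n : ℕ} (hn : 0 < n) {y l : ℝ} (hy : 1 ≤ y) (hl : 0 ≤ l)
    (t : ℝ) :
    ‖laplaceIntegrand n y l t‖ ≤ exp (3 / 2 - t ^ 2 / 2) := by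
  by_cases ht : t ∈ Set.Ioo (-√n) (y - √n)
  · rw [laplaceIntegrand, Set.indicator_of_mem ht, norm_of_nonneg (exp_pos _).le]
    exact exp_le_exp.2 (laplaceExponent_le hn hy hl ht)
  · rw [laplaceIntegrand, Set.indicator_of_notMem ht, norm_zero]
    positivity

lemma abs_laplaceExponent_add_sq_le {n : ℕ} {y l t : ℝ} (hy : 0 < y) (hl : 0 ≤ l)
    (hr : 1 ≤ √n) (ht : 2 * |t| ≤ √n) (hry : 4 * √n ≤ y) :
    |laplaceExponent n y l t + t ^ 2| ≤ 2 * |t| ^ 3 / √n + 20 * (√n ^ 3 / y) + 4 * (l * √n) := by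
  set r := √(n : ℝ) with hr_def
  have hn : 0 < n := Nat.cast_pos.1 (sqrt_pos.1 (by linarith))
  have hrr : r ^ 2 = n := sq_sqrt (Nat.cast_nonneg n)
  set s := r + t with hs_def
  have hs : r / 2 ≤ s ∧ s ≤ 2 * r := by
    constructor <;> linarith [neg_abs_le t, le_abs_self t]
  have hs0 : 0 < s := by linarith
  have hP1 :=
    abs_sq_mul_log_one_sub_div_add_le (a := r) (u := -t) (by linarith) (by rwa [abs_neg])
  have hP2 := abs_sq_mul_log_one_sub_div_add_le (u := s) hy (by rw [abs_of_pos hs0]; linarith)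
  have hL := abs_log_one_sub_le (x := s / y) (by
    rw [abs_of_pos (div_pos hs0 hy), div_le_iff₀ hy]; linarith)
  have hP3 : |(l * y - 1) * log (1 - s / y)| ≤ 4 * (l * r) + 4 * (r ^ 3 / y) := by
    rw [abs_mul]
    calc |l * y - 1| * |log (1 - s / y)| ≤ (l * y + 1) * (2 * (s / y)) := by
          gcongr
          · have := mul_nonneg hl hy.le
            exact abs_sub_le_iff.2 ⟨by linarith, by linarith⟩
          · rwa [abs_of_pos (div_pos hs0 hy)] at hL
      _ = 2 * (l * s) + 2 * (s / y) := by field_simp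
      _ ≤ 2 * (l * (2 * r)) + 2 * (r ^ 3 / y * 2) := by
          gcongr
          · exact hs.2
          · rw [div_mul_eq_mul_div]; gcongr; nlinarith
      _ = 4 * (l * r) + 4 * (r ^ 3 / y) := by ring
  have hsplit : laplaceExponent n y l t + t ^ 2
      = (r ^ 2 * log (1 - -t / r) + r * -t + (-t) ^ 2 / 2)
        + (y ^ 2 * log (1 - s / y) + y * s + s ^ 2 / 2) + (l * y - 1) * log (1 - s / y) := by
    rw [laplaceExponent_eq hn hs0, ← hr_def, ← hs_def, neg_div, sub_neg_eq_add, hs_def]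
    linear_combination (-(1 / 2 + log (1 + t / r))) * hrr
  have hP2' : 2 * |s| ^ 3 / y ≤ 16 * (r ^ 3 / y) := by
    rw [abs_of_pos hs0, ← mul_div_assoc]
    exact div_le_div_of_nonneg_right (by nlinarith [pow_le_pow_left₀ hs0.le hs.2 3]) hy.le
  rw [abs_neg] at hP1
  rw [hsplit]
  linarith [abs_add_three (r ^ 2 * log (1 - -t / r) + r * -t + (-t) ^ 2 / 2)
    (y ^ 2 * log (1 - s / y) + y * s + s ^ 2 / 2) ((l * y - 1) * log (1 - s / y))]

lemma laplaceIntegrand_eq_indicator_comp (n : ℕ) {y : ℝ} (hy : 0 < y) (l t : ℝ) :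
    laplaceIntegrand n y l t = y ^ n * exp (n / 2 - n / 2 * log n) *
      Set.indicator (Set.Ioo 0 1) (fun x => exp (y ^ 2 * (x + log (1 - x)) + l * y * log (1 - x))
        * x ^ n / (1 - x)) (y⁻¹ * (t + √n)) := by
  have hx : y⁻¹ * (t + √n) = (√n + t) / y := by rw [inv_mul_eq_div, add_comm]
  have hmem : t ∈ Set.Ioo (-√n) (y - √n) ↔ (√n + t) / y ∈ Set.Ioo 0 1 := by
    simp only [Set.mem_Ioo, div_pos_iff_of_pos_right hy, div_lt_one hy]
    constructor <;> rintro ⟨h₁, h₂⟩ <;> constructor <;> linarith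
  rw [laplaceIntegrand, hx]
  by_cases ht : t ∈ Set.Ioo (-√n) (y - √n)
  · have hs : 0 < √n + t := by linarith [ht.1]
    have h1x : 0 < 1 - (√n + t) / y := by linarith [(hmem.1 ht).2]
    have hE : laplaceExponent n y l t = n * log (√n + t) + (n / 2 - n / 2 * log n)
        + (y ^ 2 * ((√n + t) / y + log (1 - (√n + t) / y)) + l * y * log (1 - (√n + t) / y))
        - log (1 - (√n + t) / y) := by
      rw [laplaceExponent, mul_add (y ^ 2), show y ^ 2 * ((√n + t) / y) = y * (√n + t) by
        field_simp]
      ring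
    rw [Set.indicator_of_mem ht, Set.indicator_of_mem (hmem.1 ht), hE, exp_sub, exp_add, exp_add,
      ← log_pow, exp_log (pow_pos hs n), exp_log h1x, div_pow]
    field_simp
  · rw [Set.indicator_of_notMem ht, Set.indicator_of_notMem (mt hmem.2 ht), mul_zero]

lemma integral_laplaceIntegrand (n : ℕ) {y : ℝ} (hy : 0 < y) (l : ℝ) :
    ∫ t, laplaceIntegrand n y l t = y ^ (n + 1) *
      (∫ x in Set.Ioo (0 : ℝ) 1, exp (y ^ 2 * (x + log (1 - x)) + l * y * log (1 - x))
        * x ^ n / (1 - x)) * exp (n / 2 - n / 2 * log n) := by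
  set f : ℝ → ℝ := fun x =>
    exp (y ^ 2 * (x + log (1 - x)) + l * y * log (1 - x)) * x ^ n / (1 - x)
  rw [funext (laplaceIntegrand_eq_indicator_comp n hy l), integral_const_mul,
    integral_add_right_eq_self (fun x => (Set.Ioo 0 1).indicator f (y⁻¹ * x)),
    Measure.integral_comp_inv_mul_left, integral_indicator measurableSet_Ioo, abs_of_pos hy,
    smul_eq_mul]
  ring

section Limits

variable {ι : Type*} {L : Filter ι}

lemma eventually_one_le_and_four_mul_le {r y : ι → ℝ} (hy : ∀ k, 0 < y k)
    (hr : Tendsto r L atTop) (hry : Tendsto (fun k => r k ^ 3 / y k) L (𝓝 0)) :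
    ∀ᶠ k in L, 1 ≤ r k ∧ 4 * r k ≤ y k := by
  filter_upwards [hr.eventually_ge_atTop 1,
    hry.eventually_le_const (by norm_num : (0 : ℝ) < 1 / 4)] with k hr1 hk
  rw [div_le_iff₀ (hy k)] at hk
  exact ⟨hr1, by nlinarith [pow_le_pow_right₀ hr1 (by norm_num : 1 ≤ 3)]⟩

lemma tendsto_laplaceIntegrand {N : ι → ℕ} {y lam : ι → ℝ} (hy : ∀ k, 0 < y k)
    (hlam : ∀ k, 0 ≤ lam k) (hr : Tendsto (fun k => √(N k : ℝ)) L atTop)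
    (hry : Tendsto (fun k => √(N k : ℝ) ^ 3 / y k) L (𝓝 0))
    (hlr : Tendsto (fun k => lam k * √(N k : ℝ)) L (𝓝 0)) (t : ℝ) :
    Tendsto (fun k => laplaceIntegrand (N k) (y k) (lam k) t) L (𝓝 (exp (-t ^ 2))) := by
  have hev : ∀ᶠ k in L, 1 ≤ √(N k : ℝ) ∧ 4 * √(N k : ℝ) ≤ y k ∧ 2 * |t| ≤ √(N k : ℝ) := by
    filter_upwards [eventually_one_le_and_four_mul_le hy hr hry, hr.eventually_ge_atTop (2 * |t|)]
      with k hk ht using ⟨hk.1, hk.2, ht⟩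
  have herr : Tendsto (fun k => 2 * |t| ^ 3 / √(N k : ℝ) + 20 * (√(N k : ℝ) ^ 3 / y k)
      + 4 * (lam k * √(N k : ℝ))) L (𝓝 0) := by
    simpa [div_eq_mul_inv] using
      ((hr.inv_tendsto_atTop.const_mul (2 * |t| ^ 3)).add (hry.const_mul 20)).add
        (hlr.const_mul 4)
  have hexp : Tendsto (fun k => laplaceExponent (N k) (y k) (lam k) t) L (𝓝 (-t ^ 2)) := by
    have := squeeze_zero_norm' (f := fun k => laplaceExponent (N k) (y k) (lam k) t + t ^ 2)
      (hev.mono fun k ⟨hr1, h4r, ht⟩ => abs_laplaceExponent_add_sq_le (hy k) (hlam k) hr1 ht h4r)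
      herr
    have := this.sub_const (t ^ 2)
    rw [zero_sub] at this
    exact this.congr fun k => add_sub_cancel_right _ _
  refine ((continuous_exp.tendsto _).comp hexp).congr' (hev.mono fun k ⟨hr1, h4r, ht⟩ => ?_)
  simp only [Function.comp_apply, laplaceIntegrand]
  have hmem : t ∈ Set.Ioo (-√(N k : ℝ)) (y k - √(N k : ℝ)) := by
    constructor <;> linarith [neg_abs_le t, le_abs_self t]
  rw [Set.indicator_of_mem hmem]

end Limits

theorem laplace_asymptotics_an_general (N : ℕ → ℕ) (y lam : ℕ → ℝ)
    (hy : ∀ k, 0 < y k) (hlam : ∀ k, 0 ≤ lam k)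
    (hN : Tendsto (fun k => (N k : ℝ)) atTop atTop)
    (h1 : Tendsto (fun k => (N k : ℝ) ^ ((3 : ℝ) / 2) / y k) atTop (nhds 0))
    (h2 : Tendsto (fun k => lam k * Real.sqrt (N k : ℝ)) atTop (nhds 0)) :
    Tendsto
      (fun k =>
        (y k) ^ (N k + 1) *
          (∫ x in Set.Ioo (0 : ℝ) 1,
            Real.exp ((y k) ^ 2 * (x + Real.log (1 - x)) + lam k * y k * Real.log (1 - x)) *
              x ^ (N k) / (1 - x)) *
          Real.exp ((N k : ℝ) / 2 - (N k : ℝ) / 2 * Real.log (N k : ℝ)))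
      atTop (nhds (Real.sqrt π)) := by
  have hr : Tendsto (fun k => √(N k : ℝ)) atTop atTop := tendsto_sqrt_atTop.comp hN
  have h1' : Tendsto (fun k => √(N k : ℝ) ^ 3 / y k) atTop (𝓝 0) := by
    refine h1.congr fun k => ?_
    rw [rpow_div_two_eq_sqrt _ (Nat.cast_nonneg _), ← rpow_natCast]
    norm_num
  have hbound : Integrable (fun t : ℝ => exp (3 / 2 - t ^ 2 / 2)) := by
    refine ((integrable_exp_neg_mul_sq (by norm_num : (0 : ℝ) < 1 / 2)).const_mul
      (exp (3 / 2))).congr (ae_of_all _ fun t => ?_)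
    simp only [← exp_add]
    ring_nf
  have hgauss : ∫ t : ℝ, exp (-t ^ 2) = √π := by simpa using integral_gaussian 1
  refine Tendsto.congr (fun k => integral_laplaceIntegrand (N k) (hy k) (lam k)) ?_
  rw [← hgauss]
  refine tendsto_integral_filter_of_dominated_convergence _
    (.of_forall fun k => (measurable_laplaceIntegrand _ _ _).aestronglyMeasurable) ?_ hbound
    (ae_of_all _ (tendsto_laplaceIntegrand hy hlam hr h1' h2))
  filter_upwards [eventually_one_le_and_four_mul_le hy hr h1'] with k ⟨hr1, hry⟩
  exact ae_of_all _ (norm_laplaceIntegrand_le (Nat.cast_pos.1 (sqrt_pos.1 (by linarith)))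
    (by linarith) (hlam k))

/-- Laplace-type asymptotics for
`a_n(y,λ) = y^(n+1) ∫₀¹ e^(y²(x + ln(1-x)) + λ y ln(1-x)) x^n (1-x)⁻¹ dx`:
along any joint limit in which `n → ∞`, `y → ∞`, with `n^(3/2)/y → 0` and
`λ√n → 0` (and `λ ≥ 0`), one has `a_n(y,λ) e^(n/2 - (n/2) ln n) → √π`. -/
theorem laplace_asymptotics_an (N : ℕ → ℕ) (y lam : ℕ → ℝ)
    (hy : ∀ k, 0 < y k) (hlam : ∀ k, 0 ≤ lam k)
    (hN : Tendsto (fun k => (N k : ℝ)) atTop atTop)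
    (hytop : Tendsto y atTop atTop)
    (h1 : Tendsto (fun k => (N k : ℝ) ^ ((3 : ℝ) / 2) / y k) atTop (nhds 0))
    (h2 : Tendsto (fun k => lam k * Real.sqrt (N k : ℝ)) atTop (nhds 0)) :
    Tendsto
      (fun k =>
        (y k) ^ (N k + 1) *
          (∫ x in Set.Ioo (0 : ℝ) 1,
            Real.exp ((y k) ^ 2 * (x + Real.log (1 - x)) + lam k * y k * Real.log (1 - x)) *
              x ^ (N k) / (1 - x)) *
          Real.exp ((N k : ℝ) / 2 - (N k : ℝ) / 2 * Real.log (N k : ℝ)))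
      atTop (nhds (Real.sqrt π)) :=
  laplace_asymptotics_an_general N y lam hy hlam hN h1 h2
end
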